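/- arXiv:2605.24504 — 4 statements merged into one kernel-verified Lean document; each statement's English description precedes it below -/
import Mathlib

section
/- Let 𝒳 be a set and σ : 𝒳 → 𝒳 a confined self-map. Assume Λ is finite with Λ > 1 and that the Cesàro mean B := 𝒞(σ_k/Λ^k) exists and is strictly positive. Then M_σ(X) = B log X + o(log X) as X → ∞. -/
open Filter Topology Real MeasureTheory Asymptotics
open scoped Classical

noncomputable section

/-- `σ` is confined: every iterate has only finitely many fixed points. -/
def Confined {𝒳 : Type*} (σ : 𝒳 → 𝒳) : Prop :=
  ∀ k : ℕ, 1 ≤ k → {x : 𝒳 | σ^[k] x = x}.Finite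

/-- `σ_k`: the number of fixed points of the `k`-th iterate of `σ`. -/
def fixCount {𝒳 : Type*} (σ : 𝒳 → 𝒳) (k : ℕ) : ℕ :=
  Nat.card {x : 𝒳 // σ^[k] x = x}

/-- A prime orbit: a finite set of the form `{x, σ x, …, σ^[ℓ-1] x}` of cardinality
exactly `ℓ ≥ 1`, mapped to itself by `σ`. -/
def IsPrimeOrbit {𝒳 : Type*} (σ : 𝒳 → 𝒳) (P : Set 𝒳) : Prop :=
  ∃ (x : 𝒳) (ℓ : ℕ), 0 < ℓ ∧ P = (fun i => σ^[i] x) '' Set.Iio ℓ ∧ P.ncard = ℓ ∧ σ '' P = P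

/-- The type of prime orbits of `σ`. -/
def PrimeOrbit {𝒳 : Type*} (σ : 𝒳 → 𝒳) := {P : Set 𝒳 // IsPrimeOrbit σ P}

/-- The length `ℓ(P)` of a prime orbit. -/
def orbitLen {𝒳 : Type*} {σ : 𝒳 → 𝒳} (P : PrimeOrbit σ) : ℕ := P.1.ncard

/-- General orbits: elements of the free abelian monoid on the prime orbits,
i.e. finitely supported multisets of prime orbits. -/
abbrev GenOrbit {𝒳 : Type*} (σ : 𝒳 → 𝒳) := PrimeOrbit σ →₀ ℕ

/-- The length of a general orbit: sum of the lengths of its prime components,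
with multiplicity. -/
def genLen {𝒳 : Type*} {σ : 𝒳 → 𝒳} (O : GenOrbit σ) : ℕ :=
  O.sum fun P m => m * orbitLen P

/-- `N_σ(X)`: the number of general orbits of length at most `X`. -/
def Ncount {𝒳 : Type*} (σ : 𝒳 → 𝒳) (X : ℕ) : ℕ :=
  Nat.card {O : GenOrbit σ // genLen O ≤ X}

/-- `P_ℓ`: the number of prime orbits of length `ℓ`. -/
def Pcount {𝒳 : Type*} (σ : 𝒳 → 𝒳) (ℓ : ℕ) : ℕ :=
  Nat.card {P : PrimeOrbit σ // orbitLen P = ℓ}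

/-- The Mertens-type counting function `M_σ(X) = Σ_{1 ≤ ℓ ≤ X} P_ℓ Λ^{-ℓ}`. -/
def Mfun {𝒳 : Type*} (σ : 𝒳 → 𝒳) (Λ : ℝ) (X : ℕ) : ℝ :=
  ∑ ℓ ∈ Finset.Icc 1 X, (Pcount σ ℓ : ℝ) / Λ ^ ℓ

/-- The Cesàro mean of the real sequence `a` (indexed from `1`) equals `B`. -/
def CesaroLim (a : ℕ → ℝ) (B : ℝ) : Prop :=
  Tendsto (fun X : ℕ => (∑ k ∈ Finset.Icc 1 X, a k) / (X : ℝ)) atTop (𝓝 B)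

/-- Extended-real logarithm, sending `0` (and negative numbers) to `-∞`. -/
def elog (x : ℝ) : EReal := if x ≤ 0 then ⊥ else ((Real.log x : ℝ) : EReal)

/-- The sequence `log(σ_k)/k`, with values in the extended reals
(so that `σ_k = 0` contributes `-∞`). -/
def growthSeq {𝒳 : Type*} (σ : 𝒳 → 𝒳) (k : ℕ) : EReal :=
  elog (fixCount σ k) * ((((k : ℝ)⁻¹ : ℝ)) : EReal)

/-- The growth rate of `σ` is the (finite) real number `Λ`, i.e.
`limsup_{k→∞} log(σ_k)/k = log Λ` in the extended reals. -/
def GrowthEq {𝒳 : Type*} (σ : 𝒳 → 𝒳) (Λ : ℝ) : Prop :=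
  Filter.limsup (growthSeq σ) atTop = ((Real.log Λ : ℝ) : EReal)

/-- The probability that a uniformly chosen general orbit of length at most `X`
satisfies the predicate `Q`. -/
def probN {𝒳 : Type*} (σ : 𝒳 → 𝒳) (X : ℕ) (Q : GenOrbit σ → Prop) : ℝ :=
  (Nat.card {O : GenOrbit σ // genLen O ≤ X ∧ Q O} : ℝ) / (Ncount σ X : ℝ)

/-- `ω(O)`: the number of distinct prime orbits dividing the general orbit `O`. -/
def omegaCount {𝒳 : Type*} {σ : 𝒳 → 𝒳} (O : GenOrbit σ) : ℕ := O.support.card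

/-!
Counting the fixed points of `σ^[k]` orbit by orbit gives `σ_k = ∑_{d ∣ k} d P_d`, hence
`∑_{k ≤ X} σ_k / (k Λ^k) = M_σ(X) + ∑_{k ≤ X} ∑_{d ∣ k, d < k} d P_d / (k Λ^k)`.
By partial summation, Cesàro convergence of `σ_k / Λ^k` to `B` makes the left side
`B log X + o(log X)`. Bounded Cesàro means give `σ_d ≤ C d Λ^d`, and a proper divisor of `k` is
at most `k / 2`, so the `k`-th correction term is `O(k Λ^{-k/2})` and the correction converges.
-/

open Function

section Orbits

variable {𝒳 : Type*} {σ : 𝒳 → 𝒳} {x y : 𝒳} {P : Set 𝒳}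

def orbitSet (σ : 𝒳 → 𝒳) (x : 𝒳) : Set 𝒳 := {y | y ∈ periodicOrbit σ x}

theorem orbitSet_eq_image (σ : 𝒳 → 𝒳) (x : 𝒳) :
    orbitSet σ x = (fun i => σ^[i] x) '' Set.Iio (minimalPeriod σ x) := by
  ext y
  simp [orbitSet, periodicOrbit, Cycle.mem_coe_iff, eq_comm]

theorem ncard_orbitSet (σ : 𝒳 → 𝒳) (x : 𝒳) : (orbitSet σ x).ncard = minimalPeriod σ x := by
  rw [orbitSet_eq_image, iterate_injOn_Iio_minimalPeriod.ncard_image, ← Finset.coe_Iio,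
    Set.ncard_coe_finset, Nat.card_Iio]

theorem mem_orbitSet (hx : x ∈ periodicPts σ) : y ∈ orbitSet σ x ↔ ∃ n, σ^[n] x = y :=
  mem_periodicOrbit_iff hx

theorem mem_orbitSet_self (hx : x ∈ periodicPts σ) : x ∈ orbitSet σ x :=
  self_mem_periodicOrbit hx

theorem orbitSet_iterate (hx : x ∈ periodicPts σ) (n : ℕ) :
    orbitSet σ (σ^[n] x) = orbitSet σ x := by
  simp only [orbitSet, periodicOrbit_apply_iterate_eq hx]

theorem image_orbitSet (hx : x ∈ periodicPts σ) : σ '' orbitSet σ x = orbitSet σ x := by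
  have hσx : σ x ∈ periodicPts σ := by
    rw [← minimalPeriod_pos_iff_mem_periodicPts, minimalPeriod_apply hx]
    exact minimalPeriod_pos_of_mem_periodicPts hx
  conv_rhs => rw [← orbitSet_iterate hx 1, iterate_one]
  ext y
  simp [mem_orbitSet hx, mem_orbitSet hσx, ← iterate_succ_apply' σ, iterate_succ_apply]

theorem isPrimeOrbit_orbitSet (hx : x ∈ periodicPts σ) : IsPrimeOrbit σ (orbitSet σ x) :=
  ⟨x, _, minimalPeriod_pos_of_mem_periodicPts hx, orbitSet_eq_image σ x, ncard_orbitSet σ x,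
    image_orbitSet hx⟩

theorem IsPrimeOrbit.exists_eq_orbitSet (hP : IsPrimeOrbit σ P) :
    ∃ x ∈ periodicPts σ, orbitSet σ x = P := by
  obtain ⟨x, ℓ, hℓ, rfl, hcard, hσP⟩ := hP
  -- `x` lies in `σ '' P = P`, so it returns to itself within `ℓ` steps
  obtain ⟨_, ⟨i, hi, rfl⟩, hix⟩ : x ∈ σ '' ((σ^[·] x) '' Set.Iio ℓ) := by
    rw [hσP]; exact ⟨0, hℓ, rfl⟩
  have hper : IsPeriodicPt σ (i + 1) x := by rw [IsPeriodicPt, IsFixedPt, iterate_succ_apply', hix]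
  have hx : x ∈ periodicPts σ := mk_mem_periodicPts i.succ_pos hper
  have hsub : (σ^[·] x) '' Set.Iio ℓ ⊆ orbitSet σ x := by
    rintro _ ⟨j, -, rfl⟩
    exact (mem_orbitSet hx).2 ⟨j, rfl⟩
  have hle : ℓ ≤ minimalPeriod σ x := by
    rw [← hcard, ← ncard_orbitSet]
    exact Set.ncard_le_ncard hsub (by rw [orbitSet_eq_image]; exact (Set.finite_Iio _).image _)
  have hge : minimalPeriod σ x ≤ ℓ := (hper.minimalPeriod_le i.succ_pos).trans hi
  exact ⟨x, hx, by rw [orbitSet_eq_image, le_antisymm hge hle]⟩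

theorem IsPrimeOrbit.orbitSet_eq (hP : IsPrimeOrbit σ P) (hy : y ∈ P) : orbitSet σ y = P := by
  obtain ⟨x, hx, rfl⟩ := hP.exists_eq_orbitSet
  obtain ⟨n, rfl⟩ := (mem_orbitSet hx).1 hy
  exact orbitSet_iterate hx n

theorem IsPrimeOrbit.minimalPeriod_eq (hP : IsPrimeOrbit σ P) (hy : y ∈ P) :
    minimalPeriod σ y = P.ncard := by
  rw [← hP.orbitSet_eq hy, ncard_orbitSet]

end Orbits

section Counting

variable {𝒳 : Type*} {σ : 𝒳 → 𝒳}

theorem Pcount_eq_ncard (σ : 𝒳 → 𝒳) (d : ℕ) :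
    Pcount σ d = {P : Set 𝒳 | IsPrimeOrbit σ P ∧ P.ncard = d}.ncard := by
  rw [Pcount, ← Nat.card_coe_set_eq]
  exact Nat.card_congr (Equiv.subtypeSubtypeEquivSubtypeInter (IsPrimeOrbit σ) (·.ncard = d))

theorem ncard_setOf_minimalPeriod_eq {d : ℕ} (hd : 0 < d)
    (hfin : {x | minimalPeriod σ x = d}.Finite) :
    {x | minimalPeriod σ x = d}.ncard = d * Pcount σ d := by
  set S := hfin.toFinset
  have hS {x : 𝒳} : x ∈ S ↔ minimalPeriod σ x = d := hfin.mem_toFinset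
  have hper {x : 𝒳} (hx : x ∈ S) : x ∈ periodicPts σ :=
    minimalPeriod_pos_iff_mem_periodicPts.1 (hd.trans_eq (hS.1 hx).symm)
  have hfiber : ∀ P ∈ S.image (orbitSet σ), (S.filter (orbitSet σ · = P)).card = d := by
    intro _ hP
    obtain ⟨x, hx, rfl⟩ := Finset.mem_image.1 hP
    have hprime := isPrimeOrbit_orbitSet (hper hx)
    have hcoe : (↑(S.filter (orbitSet σ · = orbitSet σ x)) : Set 𝒳) = orbitSet σ x := by
      ext y
      simp only [Finset.coe_filter, Set.mem_ofPred_eq, hS]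
      refine ⟨fun ⟨_, hy⟩ => ?_, fun hy => ⟨?_, hprime.orbitSet_eq hy⟩⟩
      · exact hy ▸ mem_orbitSet_self (hper (hS.2 ‹_›))
      · rw [hprime.minimalPeriod_eq hy, ncard_orbitSet, hS.1 hx]
    rw [← Set.ncard_coe_finset, hcoe, ncard_orbitSet, hS.1 hx]
  have himage : (↑(S.image (orbitSet σ)) : Set (Set 𝒳)) =
      {P | IsPrimeOrbit σ P ∧ P.ncard = d} := by
    ext P
    simp only [Finset.coe_image, Set.mem_image, Finset.mem_coe, hS, Set.mem_ofPred_eq]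
    refine ⟨?_, fun ⟨hP, hPd⟩ => ?_⟩
    · rintro ⟨x, hx, rfl⟩
      exact ⟨isPrimeOrbit_orbitSet (hper (hS.2 hx)), by rw [ncard_orbitSet, hx]⟩
    · obtain ⟨x, hx, rfl⟩ := hP.exists_eq_orbitSet
      exact ⟨x, by rw [← hPd, ncard_orbitSet], rfl⟩
  rw [Set.ncard_eq_toFinset_card _ hfin, Finset.card_eq_sum_card_image (orbitSet σ) S,
    Finset.sum_congr rfl hfiber, Finset.sum_const, smul_eq_mul, mul_comm, Pcount_eq_ncard,
    ← himage, Set.ncard_coe_finset]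

theorem fixCount_eq_sum_divisors (hσ : Confined σ) {k : ℕ} (hk : 0 < k) :
    fixCount σ k = ∑ d ∈ k.divisors, d * Pcount σ d := by
  have hfin := hσ k hk
  have hfiber : ∀ d ∈ k.divisors,
      (hfin.toFinset.filter (minimalPeriod σ · = d)).card = d * Pcount σ d := by
    intro d hd
    have hd0 := Nat.pos_of_mem_divisors hd
    have hset : (↑(hfin.toFinset.filter (minimalPeriod σ · = d)) : Set 𝒳) =
        {x | minimalPeriod σ x = d} := by
      ext x
      simp only [Finset.coe_filter, Set.Finite.mem_toFinset, Set.mem_ofPred_eq,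
        and_iff_right_iff_imp]
      rintro rfl
      exact isPeriodicPt_iff_minimalPeriod_dvd.2 (Nat.dvd_of_mem_divisors hd)
    have hfin_d : {x | minimalPeriod σ x = d}.Finite :=
      (hσ d hd0).subset fun x hx => hx ▸ iterate_minimalPeriod
    rw [← Set.ncard_coe_finset, hset, ncard_setOf_minimalPeriod_eq hd0 hfin_d]
  have hmaps : ∀ x ∈ hfin.toFinset, minimalPeriod σ x ∈ k.divisors := fun x hx =>
    Nat.mem_divisors.2 ⟨IsPeriodicPt.minimalPeriod_dvd (hfin.mem_toFinset.1 hx), hk.ne'⟩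
  change Nat.card ({x | σ^[k] x = x} : Set 𝒳) = _
  rw [Nat.card_coe_set_eq, Set.ncard_eq_toFinset_card _ hfin,
    Finset.card_eq_sum_card_fiberwise hmaps, Finset.sum_congr rfl hfiber]

theorem fixCount_eq_sum_properDivisors_add (hσ : Confined σ) {k : ℕ} (hk : 0 < k) :
    fixCount σ k = ∑ d ∈ k.properDivisors, d * Pcount σ d + k * Pcount σ k := by
  rw [fixCount_eq_sum_divisors hσ hk, ← Nat.cons_self_properDivisors hk.ne', Finset.sum_cons,
    add_comm]

end Counting

section LogarithmicMeans

theorem isLittleO_one_log : (fun _ : ℕ => (1 : ℝ)) =o[atTop] fun X : ℕ => Real.log X :=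
  (isLittleO_one_left_iff ℝ).2 <|
    tendsto_norm_atTop_atTop.comp (tendsto_log_atTop.comp tendsto_natCast_atTop_atTop)

theorem isLittleO_harmonic_sub_log :
    (fun n : ℕ => (harmonic n : ℝ) - Real.log n) =o[atTop] fun n : ℕ => Real.log n :=
  (tendsto_harmonic_sub_log.isBigO_one ℝ).trans_isLittleO isLittleO_one_log

theorem isBigO_harmonic_log :
    (fun n : ℕ => (harmonic n : ℝ)) =O[atTop] fun n : ℕ => Real.log n :=
  (isLittleO_harmonic_sub_log.isBigO.add (isBigO_refl _ _)).congr_left fun _ => sub_add_cancel _ _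

theorem sum_Icc_one_eq_sum_range {M : Type*} [AddCommMonoid M] (f : ℕ → M) (X : ℕ) :
    ∑ k ∈ Finset.Icc 1 X, f k = ∑ i ∈ Finset.range X, f (i + 1) := by
  rw [Finset.range_eq_Ico, Finset.sum_Ico_add', zero_add, Finset.Ico_add_one_right_eq_Icc]

theorem sum_Icc_div_eq_sum_partialSums (a : ℕ → ℝ) (X : ℕ) :
    ∑ k ∈ Finset.Icc 1 X, a k / k =
      ∑ k ∈ Finset.Icc 1 X, (∑ j ∈ Finset.Icc 1 k, a j) / (k * (k + 1))
        + (∑ j ∈ Finset.Icc 1 X, a j) / (X + 1) := by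
  induction X with
  | zero => simp
  | succ X ih =>
    simp only [Finset.sum_Icc_succ_top (Nat.le_add_left 1 X), ih]
    push_cast
    field_simp
    ring

theorem CesaroLim.sum_div_isLittleO_log {c : ℕ → ℝ} (h : CesaroLim c 0) :
    (fun X : ℕ => ∑ k ∈ Finset.Icc 1 X, c k / k) =o[atTop] fun X : ℕ => Real.log X := by
  set S : ℕ → ℝ := fun X => ∑ k ∈ Finset.Icc 1 X, c k
  have hS : Tendsto (fun i : ℕ => S (i + 1) / (i + 1)) atTop (𝓝 0) := by
    simpa [S, Function.comp_def] using h.comp (tendsto_add_atTop_nat 1)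
  have hinv : (fun i : ℕ => 1 / ((i : ℝ) + 2)) =O[atTop] fun i : ℕ => 1 / ((i : ℝ) + 1) := by
    refine IsBigO.of_bound 1 (Eventually.of_forall fun i => ?_)
    rw [one_mul, Real.norm_of_nonneg (by positivity), Real.norm_of_nonneg (by positivity)]
    gcongr
    norm_num
  have hterm : (fun i : ℕ => S (i + 1) / (i + 1) * (1 / ((i : ℝ) + 2))) =o[atTop]
      fun i : ℕ => 1 / ((i : ℝ) + 1) := by
    simpa only [one_mul] using ((isLittleO_one_iff ℝ).2 hS).mul_isBigO hinv
  have hmain := hterm.sum_range (fun i => by positivity) tendsto_sum_range_one_div_nat_succ_atTop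
  have hharm (X : ℕ) : ∑ i ∈ Finset.range X, 1 / ((i : ℝ) + 1) = harmonic X := by
    simp [harmonic]
  have hbd : Tendsto (fun X : ℕ => S X / (X + 1)) atTop (𝓝 0) := by
    have := h.mul (tendsto_natCast_div_add_atTop (1 : ℝ))
    rw [zero_mul] at this
    refine this.congr' ?_
    filter_upwards [eventually_ne_atTop 0] with X hX
    field_simp
    rfl
  refine ((hmain.trans_isBigO ?_).add ((hbd.isBigO_one ℝ).trans_isLittleO isLittleO_one_log))
    |>.congr_left fun X => ?_
  · simpa only [hharm] using isBigO_harmonic_log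
  · rw [sum_Icc_div_eq_sum_partialSums, sum_Icc_one_eq_sum_range]
    push_cast
    congr 1
    refine Finset.sum_congr rfl fun i _ => ?_
    field_simp
    ring

theorem CesaroLim.sub_const {a : ℕ → ℝ} {B : ℝ} (h : CesaroLim a B) :
    CesaroLim (fun k => a k - B) 0 := by
  have := Tendsto.sub_const h B
  rw [sub_self] at this
  refine this.congr' ?_
  filter_upwards [eventually_ne_atTop 0] with X hX
  simp only [Finset.sum_sub_distrib, Finset.sum_const, Nat.card_Icc, add_tsub_cancel_right,
    nsmul_eq_mul]
  field_simp

theorem CesaroLim.sum_div_sub_mul_log_isLittleO {a : ℕ → ℝ} {B : ℝ} (h : CesaroLim a B) :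
    (fun X : ℕ => ∑ k ∈ Finset.Icc 1 X, a k / k - B * Real.log X) =o[atTop]
      fun X : ℕ => Real.log X := by
  refine (h.sub_const.sum_div_isLittleO_log.add
    (isLittleO_harmonic_sub_log.const_mul_left B)).congr_left fun X => ?_
  simp only [harmonic_eq_sum_Icc, Rat.cast_sum, Rat.cast_inv, Rat.cast_natCast, sub_div]
  rw [Finset.sum_sub_distrib, mul_sub, Finset.mul_sum]
  simp only [div_eq_mul_inv]
  ring

theorem CesaroLim.exists_le_mul {a : ℕ → ℝ} {B : ℝ} (h : CesaroLim a B) (ha : ∀ k, 0 ≤ a k) :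
    ∃ C, 0 ≤ C ∧ ∀ k, 0 < k → a k ≤ C * k := by
  obtain ⟨C, hC⟩ := Tendsto.bddAbove_range h
  refine ⟨max C 0, le_max_right _ _, fun k hk => ?_⟩
  calc a k ≤ ∑ j ∈ Finset.Icc 1 k, a j :=
        Finset.single_le_sum (fun j _ => ha j) (Finset.mem_Icc.2 ⟨hk, le_rfl⟩)
    _ = (∑ j ∈ Finset.Icc 1 k, a j) / k * k := by field_simp
    _ ≤ max C 0 * k := by gcongr; exact (hC ⟨k, rfl⟩).trans (le_max_left _ _)

theorem Summable.sum_Icc_isLittleO_log {e : ℕ → ℝ} (he : Summable e) :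
    (fun X : ℕ => ∑ k ∈ Finset.Icc 1 X, e k) =o[atTop] fun X : ℕ => Real.log X := by
  have := ((summable_nat_add_iff 1).2 he).hasSum.tendsto_sum_nat
  simp only [← sum_Icc_one_eq_sum_range] at this
  exact (this.isBigO_one ℝ).trans_isLittleO isLittleO_one_log

end LogarithmicMeans

section ProperDivisors

variable {𝒳 : Type*} {σ : 𝒳 → 𝒳} {Λ C : ℝ}

theorem sum_properDivisors_mul_Pcount_le (hσ : Confined σ) (hΛ : 1 ≤ Λ) (hC0 : 0 ≤ C)
    (hC : ∀ d, 0 < d → (fixCount σ d : ℝ) / Λ ^ d ≤ C * d) (k : ℕ) :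
    ((∑ d ∈ k.properDivisors, d * Pcount σ d : ℕ) : ℝ) ≤ C * k ^ 2 * √Λ ^ k := by
  have hterm : ∀ d ∈ k.properDivisors, ((d * Pcount σ d : ℕ) : ℝ) ≤ C * k * √Λ ^ k := by
    intro d hd
    have hd0 := Nat.pos_of_mem_properDivisors hd
    obtain ⟨m, hm, rfl⟩ := (Nat.mem_properDivisors_iff_exists (Nat.ne_zero_of_lt
      (Nat.mem_properDivisors.1 hd).2)).1 hd
    calc ((d * Pcount σ d : ℕ) : ℝ) ≤ fixCount σ d := by
          rw [fixCount_eq_sum_properDivisors_add hσ hd0]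
          exact_mod_cast Nat.le_add_left _ _
      _ ≤ C * d * Λ ^ d := (div_le_iff₀ (by positivity)).1 (hC d hd0)
      _ = C * d * √Λ ^ (2 * d) := by rw [pow_mul, Real.sq_sqrt (by linarith)]
      _ ≤ C * ↑(d * m) * √Λ ^ (d * m) := by
          gcongr C * ?_ * √Λ ^ ?_
          · exact_mod_cast Nat.le_mul_of_pos_right d (by omega)
          · exact Real.one_le_sqrt.2 hΛ
          · exact (mul_comm 2 d).trans_le (Nat.mul_le_mul_left d hm)
  have hcard : (k.properDivisors.card : ℝ) ≤ k := by
    exact_mod_cast (Finset.card_filter_le _ _).trans (by simp)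
  calc ((∑ d ∈ k.properDivisors, d * Pcount σ d : ℕ) : ℝ)
      ≤ ∑ d ∈ k.properDivisors, C * k * √Λ ^ k := by
        push_cast at hterm ⊢
        exact Finset.sum_le_sum hterm
    _ = k.properDivisors.card * (C * k * √Λ ^ k) := by rw [Finset.sum_const, nsmul_eq_mul]
    _ ≤ k * (C * k * √Λ ^ k) := by gcongr
    _ = C * k ^ 2 * √Λ ^ k := by ring

theorem summable_sum_properDivisors_div (hσ : Confined σ) (hΛ : 1 < Λ) (hC0 : 0 ≤ C)
    (hC : ∀ d, 0 < d → (fixCount σ d : ℝ) / Λ ^ d ≤ C * d) :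
    Summable fun k : ℕ => ((∑ d ∈ k.properDivisors, d * Pcount σ d : ℕ) : ℝ) / (k * Λ ^ k) := by
  have hΛ0 : 0 < Λ := zero_lt_one.trans hΛ
  have hr : ‖(√Λ)⁻¹‖ < 1 := by
    rw [norm_inv, Real.norm_of_nonneg (Real.sqrt_nonneg _)]
    exact inv_lt_one_of_one_lt₀ (Real.lt_sqrt_of_sq_lt (by rwa [one_pow]))
  refine Summable.of_nonneg_of_le (fun k => by positivity) (fun k => ?_)
    ((summable_pow_mul_geometric_of_norm_lt_one 1 hr).mul_left C)
  rcases k.eq_zero_or_pos with rfl | hk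
  · simp
  rw [div_le_iff₀ (by positivity)]
  calc _ ≤ C * k ^ 2 * √Λ ^ k := sum_properDivisors_mul_Pcount_le hσ hΛ.le hC0 hC k
    _ = C * (k ^ 1 * (√Λ)⁻¹ ^ k) * (k * Λ ^ k) := by
      have hs : √Λ ≠ 0 := (Real.sqrt_pos.2 hΛ0).ne'
      rw [show Λ ^ k = √Λ ^ k * √Λ ^ k by rw [← mul_pow, Real.mul_self_sqrt hΛ0.le], inv_pow]
      field_simp

theorem sum_fixCount_div_eq_Mfun_add (hσ : Confined σ) (hΛ : Λ ≠ 0) (X : ℕ) :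
    ∑ k ∈ Finset.Icc 1 X, (fixCount σ k : ℝ) / Λ ^ k / k =
      Mfun σ Λ X + ∑ k ∈ Finset.Icc 1 X,
        ((∑ d ∈ k.properDivisors, d * Pcount σ d : ℕ) : ℝ) / (k * Λ ^ k) := by
  rw [Mfun, ← Finset.sum_add_distrib]
  refine Finset.sum_congr rfl fun k hk => ?_
  have hk0 : 0 < k := (Finset.mem_Icc.1 hk).1
  rw [fixCount_eq_sum_properDivisors_add hσ hk0]
  push_cast
  field_simp
  ring

end ProperDivisors

theorem mertens_dynamical_general {𝒳 : Type*} (σ : 𝒳 → 𝒳) (hσ : Confined σ)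
    (Λ B : ℝ) (hΛ : 1 < Λ)
    (hB : CesaroLim (fun k => (fixCount σ k : ℝ) / Λ ^ k) B) :
    (fun X : ℕ => Mfun σ Λ X - B * Real.log (X : ℝ))
      =o[atTop] fun X : ℕ => Real.log (X : ℝ) := by
  have hΛ0 : 0 < Λ := zero_lt_one.trans hΛ
  obtain ⟨C, hC0, hC⟩ := hB.exists_le_mul fun k => by positivity
  have hE := (summable_sum_properDivisors_div hσ hΛ hC0 hC).sum_Icc_isLittleO_log
  refine (hB.sum_div_sub_mul_log_isLittleO.sub hE).congr_left fun X => ?_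
  rw [sum_fixCount_div_eq_Mfun_add hσ hΛ0.ne' X]
  ring

/-- Theorem A, (M): if the growth rate `Λ` is finite with `Λ > 1` and the Cesàro mean
`B = 𝒞(σ_k/Λ^k)` exists and is positive, then `M_σ(X) = B log X + o(log X)`. -/
theorem mertens_dynamical {𝒳 : Type*} (σ : 𝒳 → 𝒳) (hσ : Confined σ)
    (Λ B : ℝ) (hΛfin : GrowthEq σ Λ) (hΛ : 1 < Λ)
    (hB : CesaroLim (fun k => (fixCount σ k : ℝ) / Λ ^ k) B) (hBpos : 0 < B) :
    (fun X : ℕ => Mfun σ Λ X - B * Real.log (X : ℝ))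
      =o[atTop] fun X : ℕ => Real.log (X : ℝ) :=
  mertens_dynamical_general σ hσ Λ B hΛ hB
end
end

section
/- Let (b_k)_{k≥1} be a sequence of real numbers whose Cesàro mean B = 𝒞(b_k) exists, and suppose the power series f(u) = Σ_{k≥1} b_k u^k/k converges for all 0 ≤ u < 1. Then lim_{u→1⁻} (−1/log(1−u)) · f(u) = B. -/
open Filter Topology Real

noncomputable section

lemma cesaro_zero_aux (c : ℕ → ℝ)
    (hc : Tendsto (fun X : ℕ => (∑ k ∈ Finset.Icc 1 X, c k) / (X : ℝ)) atTop (𝓝 0)) :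
    Tendsto
      (fun u : ℝ => -1 / Real.log (1 - u) * ∑' k : ℕ, c (k + 1) * u ^ (k + 1) / ((k : ℝ) + 1))
      (𝓝[<] (1 : ℝ)) (𝓝 0) := by
  set T : ℕ → ℝ := fun n => ∑ k ∈ Finset.Icc 1 n, c k with hTdef
  have hT0 : T 0 = 0 := by simp [hTdef]
  have hTc : ∀ k : ℕ, T (k + 1) - T k = c (k + 1) := by
    intro k
    have : T (k + 1) = T k + c (k + 1) := Finset.sum_Icc_succ_top (by omega) c
    linarith
  rw [Metric.tendsto_nhds]
  intro ε hε
  obtain ⟨N, hN⟩ := (Metric.tendsto_nhds.mp hc (ε / 2) (half_pos hε)).exists_forall_of_atTop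
  set C : ℝ := ∑ k ∈ Finset.range (N + 1), |T k| with hCdef
  have hC0 : 0 ≤ C := Finset.sum_nonneg fun _ _ => abs_nonneg _
  have hTle : ∀ k : ℕ, |T k| ≤ ε / 2 * k + C := by
    intro k
    rcases le_or_gt k N with h | h
    · have h1 : |T k| ≤ C := by
        apply Finset.single_le_sum (f := fun k => |T k|) (fun i _ => abs_nonneg _)
        exact Finset.mem_range.mpr (by omega)
      have : 0 ≤ ε / 2 * k := by positivity
      linarith
    · have hk1 : 1 ≤ k := by omega
      have hkpos : (0 : ℝ) < k := by exact_mod_cast hk1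
      have h2 := hN k (by omega)
      rw [Real.dist_eq, sub_zero, abs_div, abs_of_pos hkpos] at h2
      have : |T k| < ε / 2 * k := by
        rw [div_lt_iff₀ hkpos] at h2; linarith
      linarith
  -- the key bound for fixed u
  have hmain : ∀ u : ℝ, 0 < u → u < 1 →
      |∑' k : ℕ, c (k + 1) * u ^ (k + 1) / ((k : ℝ) + 1)|
        ≤ ε / 2 * (-Real.log (1 - u)) + C := by
    intro u hu0 hu1
    have hu0' : 0 ≤ u := hu0.le
    have habs : |u| < 1 := by rwa [abs_of_nonneg hu0']
    have h1u : (0 : ℝ) < 1 - u := by linarith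
    set L : ℝ := -Real.log (1 - u) with hLdef
    have hL0 : 0 ≤ L := by
      have h := Real.log_nonpos (x := 1 - u) (by linarith) (by linarith)
      simp only [hLdef]; linarith
    have hlog : HasSum (fun n : ℕ => u ^ (n + 1) / ((n : ℝ) + 1)) L :=
      hasSum_pow_div_log_of_abs_lt_one habs
    have hgeo : HasSum (fun k : ℕ => u ^ k) (1 - u)⁻¹ := hasSum_geometric_of_lt_one hu0' hu1
    have hgeo1 : HasSum (fun k : ℕ => u ^ (k + 1)) (u * (1 - u)⁻¹) :=
      (hgeo.mul_left u).congr_fun fun k => by ring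
    have hgeo2 : HasSum (fun k : ℕ => u ^ (k + 2)) (u ^ 2 * (1 - u)⁻¹) :=
      (hgeo.mul_left (u ^ 2)).congr_fun fun k => by ring
    have hlog2 : HasSum (fun k : ℕ => u ^ (k + 2) / ((k : ℝ) + 2)) (L - u) := by
      have h := (hasSum_nat_add_iff (f := fun n : ℕ => u ^ (n + 1) / ((n : ℝ) + 1)) 1).mpr
        (show HasSum (fun n : ℕ => u ^ (n + 1) / ((n : ℝ) + 1))
            ((L - u) + ∑ i ∈ Finset.range 1, u ^ (i + 1) / ((i : ℝ) + 1)) by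
          simpa using hlog)
      refine h.congr_fun fun k => ?_
      push_cast
      ring_nf
    set d : ℕ → ℝ := fun k => u ^ (k + 1) / ((k : ℝ) + 1) - u ^ (k + 2) / ((k : ℝ) + 2)
      with hddef
    have hd_nonneg : ∀ k : ℕ, 0 ≤ d k := by
      intro k
      have hle : u ^ (k + 2) ≤ u ^ (k + 1) := pow_le_pow_of_le_one hu0' hu1.le (by omega)
      have : u ^ (k + 2) / ((k : ℝ) + 2) ≤ u ^ (k + 1) / ((k : ℝ) + 1) := by
        apply div_le_div₀ (by positivity) hle (by positivity) (by linarith)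
      simp only [hddef]; linarith
    have hd : HasSum d u := by
      rw [hddef]
      have h := hlog.sub hlog2
      simpa using h
    have hkd : HasSum (fun k : ℕ => ((k : ℝ) + 1) * d k) L := by
      have h := (hgeo1.sub hgeo2).add hlog2
      have he : ∀ k : ℕ, ((k : ℝ) + 1) * d k
          = (u ^ (k + 1) - u ^ (k + 2)) + u ^ (k + 2) / ((k : ℝ) + 2) := by
        intro k
        have h1 : ((k : ℝ) + 1) ≠ 0 := by positivity
        have h2 : ((k : ℝ) + 2) ≠ 0 := by positivity
        simp only [hddef]
        field_simp
        ring
      have hval : (u * (1 - u)⁻¹ - u ^ 2 * (1 - u)⁻¹) + (L - u) = L := by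
        have h3 : u * (1 - u)⁻¹ - u ^ 2 * (1 - u)⁻¹ = u := by
          field_simp
        linarith
      rw [← hval]
      exact h.congr_fun he
    set A : ℕ → ℝ := fun k => T (k + 1) * u ^ (k + 1) / ((k : ℝ) + 1) with hAdef
    set Bk : ℕ → ℝ := fun k => T k * u ^ (k + 1) / ((k : ℝ) + 1) with hBkdef
    set M : ℝ := ε / 2 + C with hMdef
    have hM0 : 0 ≤ M := by positivity
    have hTM : ∀ k : ℕ, |T k| ≤ M * k := by
      intro k
      rcases Nat.eq_zero_or_pos k with rfl | hk
      · simp [hT0]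
      · have hk1 : (1 : ℝ) ≤ k := by exact_mod_cast hk
        have h3 := hTle k
        have h4 : C ≤ C * k := le_mul_of_one_le_right hC0 hk1
        calc |T k| ≤ ε / 2 * k + C := h3
          _ ≤ ε / 2 * k + C * k := by linarith
          _ = M * k := by simp only [hMdef]; ring
    have hsgeo : Summable (fun k : ℕ => M * u ^ (k + 1)) := hgeo1.summable.mul_left M
    have hA_bound : ∀ k : ℕ, |A k| ≤ M * u ^ (k + 1) := by
      intro k
      have hk1 : (0 : ℝ) < (k : ℝ) + 1 := by positivity
      simp only [hAdef, abs_div, abs_mul, abs_of_pos hk1, abs_of_nonneg (pow_nonneg hu0' _)]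
      rw [div_le_iff₀ hk1]
      have h5 := hTM (k + 1)
      push_cast at h5
      nlinarith [pow_nonneg hu0' (k + 1), abs_nonneg (T (k + 1))]
    have hB_bound : ∀ k : ℕ, |Bk k| ≤ M * u ^ (k + 1) := by
      intro k
      have hk1 : (0 : ℝ) < (k : ℝ) + 1 := by positivity
      simp only [hBkdef, abs_div, abs_mul, abs_of_pos hk1, abs_of_nonneg (pow_nonneg hu0' _)]
      rw [div_le_iff₀ hk1]
      have h5 := hTM k
      nlinarith [pow_nonneg hu0' (k + 1), abs_nonneg (T k), Nat.cast_nonneg (α := ℝ) k]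
    have sA : Summable A := summable_abs_iff.mp
      (Summable.of_nonneg_of_le (fun k => abs_nonneg _) hA_bound hsgeo)
    have sB : Summable Bk := summable_abs_iff.mp
      (Summable.of_nonneg_of_le (fun k => abs_nonneg _) hB_bound hsgeo)
    have sB' : Summable (fun k => Bk (k + 1)) := (summable_nat_add_iff 1).mpr sB
    have hterm1 : ∀ k : ℕ, c (k + 1) * u ^ (k + 1) / ((k : ℝ) + 1) = A k - Bk k := by
      intro k
      rw [← hTc k]
      simp only [hAdef, hBkdef]
      ring
    have hterm2 : ∀ k : ℕ, T (k + 1) * d k = A k - Bk (k + 1) := by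
      intro k
      simp only [hAdef, hBkdef, hddef]
      push_cast
      ring
    have sD : Summable (fun k => T (k + 1) * d k) :=
      (sA.sub sB').congr fun k => (hterm2 k).symm
    have key : (∑' k : ℕ, c (k + 1) * u ^ (k + 1) / ((k : ℝ) + 1))
        = ∑' k : ℕ, T (k + 1) * d k := by
      have hBk0 : Bk 0 = 0 := by simp [hBkdef, hT0]
      calc (∑' k : ℕ, c (k + 1) * u ^ (k + 1) / ((k : ℝ) + 1))
          = ∑' k : ℕ, (A k - Bk k) := tsum_congr hterm1
        _ = (∑' k, A k) - ∑' k, Bk k := Summable.tsum_sub sA sB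
        _ = (∑' k, A k) - ∑' k, Bk (k + 1) := by
            rw [Summable.tsum_eq_zero_add sB, hBk0, zero_add]
        _ = ∑' k, (A k - Bk (k + 1)) := (Summable.tsum_sub sA sB').symm
        _ = ∑' k : ℕ, T (k + 1) * d k := tsum_congr fun k => (hterm2 k).symm
    rw [key]
    have habs_sum : Summable (fun k => |T (k + 1) * d k|) := summable_abs_iff.mpr sD
    have hRHS : HasSum (fun k : ℕ => ε / 2 * (((k : ℝ) + 1) * d k) + C * d k)
        (ε / 2 * L + C * u) := (hkd.mul_left (ε / 2)).add (hd.mul_left C)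
    have step1 : |∑' k : ℕ, T (k + 1) * d k| ≤ ∑' k, |T (k + 1) * d k| := by
      have h := norm_tsum_le_tsum_norm (f := fun k => T (k + 1) * d k)
        (by simpa only [Real.norm_eq_abs] using habs_sum)
      simpa only [Real.norm_eq_abs] using h
    have step2 : (∑' k, |T (k + 1) * d k|)
        ≤ ∑' k : ℕ, (ε / 2 * (((k : ℝ) + 1) * d k) + C * d k) := by
      apply Summable.tsum_le_tsum _ habs_sum hRHS.summable
      intro k
      have h1 : |T (k + 1) * d k| = |T (k + 1)| * d k := by
        rw [abs_mul, abs_of_nonneg (hd_nonneg k)]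
      rw [h1]
      have h2 := hTle (k + 1)
      push_cast at h2
      calc |T (k + 1)| * d k ≤ (ε / 2 * ((k : ℝ) + 1) + C) * d k :=
            mul_le_mul_of_nonneg_right h2 (hd_nonneg k)
        _ = ε / 2 * (((k : ℝ) + 1) * d k) + C * d k := by ring
    have step3 : (∑' k : ℕ, (ε / 2 * (((k : ℝ) + 1) * d k) + C * d k)) = ε / 2 * L + C * u :=
      hRHS.tsum_eq
    have hCu : C * u ≤ C := by nlinarith
    calc |∑' k : ℕ, T (k + 1) * d k| ≤ ε / 2 * L + C * u := by
          rw [← step3]; exact step1.trans step2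
      _ ≤ ε / 2 * L + C := by linarith
  -- conclude via -log(1-u) → ∞
  have hLtend : Tendsto (fun u : ℝ => -Real.log (1 - u)) (𝓝[<] (1 : ℝ)) atTop := by
    have h1 : Tendsto (fun u : ℝ => 1 - u) (𝓝[<] (1 : ℝ)) (𝓝[>] (0 : ℝ)) := by
      rw [tendsto_nhdsWithin_iff]
      constructor
      · have hcont : Continuous (fun u : ℝ => 1 - u) := by continuity
        have h0 : Tendsto (fun u : ℝ => 1 - u) (𝓝 (1 : ℝ)) (𝓝 (0 : ℝ)) := by
          simpa using hcont.tendsto (1 : ℝ)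
        exact h0.mono_left nhdsWithin_le_nhds
      · exact eventually_mem_nhdsWithin.mono fun u hu => by
          simp only [Set.mem_Ioi]; simp only [Set.mem_Iio] at hu; linarith
    have h2 : Tendsto (fun u : ℝ => Real.log (1 - u)) (𝓝[<] (1 : ℝ)) atBot :=
      Real.tendsto_log_nhdsGT_zero.comp h1
    exact tendsto_neg_atTop_iff.mpr h2
  have hbig : ∀ᶠ u in 𝓝[<] (1 : ℝ), 2 * C / ε + 1 ≤ -Real.log (1 - u) :=
    hLtend.eventually_ge_atTop _
  filter_upwards [Ioo_mem_nhdsLT_of_mem (show (1 : ℝ) ∈ Set.Ioc (0 : ℝ) 1 by norm_num),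
    hbig] with u hu hLbig
  rw [Real.dist_eq, sub_zero]
  set L : ℝ := -Real.log (1 - u) with hLdef
  set S := ∑' k : ℕ, c (k + 1) * u ^ (k + 1) / ((k : ℝ) + 1) with hSdef
  have hCε : (0 : ℝ) ≤ 2 * C / ε := div_nonneg (by linarith) hε.le
  have hL1 : (0 : ℝ) < L := by linarith
  have hbound := hmain u hu.1 hu.2
  rw [← hLdef, ← hSdef] at hbound
  have hrw : -1 / Real.log (1 - u) = 1 / L := by
    rw [hLdef, neg_div, div_neg]
  have habs2 : |(-1 / Real.log (1 - u)) * S| = |S| / L := by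
    rw [hrw, abs_mul, abs_of_pos (one_div_pos.mpr hL1), one_div, inv_mul_eq_div]
  rw [habs2]
  calc |S| / L ≤ (ε / 2 * L + C) / L :=
        (div_le_div_iff_of_pos_right hL1).mpr hbound
    _ = ε / 2 + C / L := by
        rw [add_div, mul_div_assoc, div_self hL1.ne', mul_one]
    _ < ε := by
        have hεne : ε ≠ 0 := hε.ne'
        have h5 : C / L < ε / 2 := by
          rw [div_lt_iff₀ hL1]
          have h6 : ε / 2 * (2 * C / ε + 1) ≤ ε / 2 * L :=
            mul_le_mul_of_nonneg_left hLbig (by positivity)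
          have h7 : ε / 2 * (2 * C / ε + 1) = C + ε / 2 := by field_simp
          linarith
        linarith

/-- If the Cesàro mean `B = 𝒞(b_k)` exists and `f(u) = Σ_{k≥1} b_k u^k / k` converges for
`0 ≤ u < 1`, then `lim_{u→1⁻} (-1/log(1-u)) f(u) = B`. -/
theorem cesaro_logarithmic_summability (b : ℕ → ℝ) (B : ℝ) (hB : CesaroLim b B)
    (hconv : ∀ u : ℝ, 0 ≤ u → u < 1 →
      Summable fun k : ℕ => b (k + 1) * u ^ (k + 1) / ((k : ℝ) + 1)) :
    Tendsto
      (fun u : ℝ => -1 / Real.log (1 - u) * ∑' k : ℕ, b (k + 1) * u ^ (k + 1) / ((k : ℝ) + 1))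
      (𝓝[<] (1 : ℝ)) (𝓝 B) := by
  set c : ℕ → ℝ := fun k => b k - B with hcdef
  have hc : Tendsto (fun X : ℕ => (∑ k ∈ Finset.Icc 1 X, c k) / (X : ℝ)) atTop (𝓝 0) := by
    have h1 : ∀ᶠ X : ℕ in atTop, (∑ k ∈ Finset.Icc 1 X, c k) / (X : ℝ)
        = (∑ k ∈ Finset.Icc 1 X, b k) / (X : ℝ) - B := by
      filter_upwards [eventually_ge_atTop 1] with X hX
      have hX0 : (X : ℝ) ≠ 0 := Nat.cast_ne_zero.mpr (by omega)
      simp only [hcdef, Finset.sum_sub_distrib, Finset.sum_const, Nat.card_Icc,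
        Nat.add_sub_cancel, nsmul_eq_mul]
      rw [sub_div, mul_comm, mul_div_assoc, div_self hX0, mul_one]
    have h2 : Tendsto (fun X : ℕ => (∑ k ∈ Finset.Icc 1 X, b k) / (X : ℝ) - B) atTop
        (𝓝 (B - B)) := hB.sub tendsto_const_nhds
    rw [sub_self] at h2
    exact Tendsto.congr' (h1.mono fun X h => h.symm) h2
  have hmain := (cesaro_zero_aux c hc).add_const B
  rw [zero_add] at hmain
  refine Tendsto.congr' ?_ hmain
  filter_upwards [Ioo_mem_nhdsLT_of_mem (show (1 : ℝ) ∈ Set.Ioc (0 : ℝ) 1 by norm_num)]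
    with u hu
  have hu0 : (0 : ℝ) ≤ u := hu.1.le
  have hu1 : u < 1 := hu.2
  have habs : |u| < 1 := by rwa [abs_of_nonneg hu0]
  have hlogB : HasSum (fun k : ℕ => B * (u ^ (k + 1) / ((k : ℝ) + 1)))
      (B * (-Real.log (1 - u))) :=
    (hasSum_pow_div_log_of_abs_lt_one habs).mul_left B
  have sb := hconv u hu0 hu1
  have htsum : (∑' k : ℕ, b (k + 1) * u ^ (k + 1) / ((k : ℝ) + 1))
      = (∑' k : ℕ, c (k + 1) * u ^ (k + 1) / ((k : ℝ) + 1)) + B * (-Real.log (1 - u)) := by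
    have sc : Summable (fun k : ℕ => c (k + 1) * u ^ (k + 1) / ((k : ℝ) + 1)) := by
      refine (sb.sub hlogB.summable).congr fun k => ?_
      simp only [hcdef]; ring
    rw [← hlogB.tsum_eq, ← Summable.tsum_add sc hlogB.summable]
    exact tsum_congr fun k => by simp only [hcdef]; ring
  have hlogne : Real.log (1 - u) ≠ 0 :=
    ne_of_lt (Real.log_neg (by linarith) (by linarith [hu.1]))
  show -1 / Real.log (1 - u) * (∑' k : ℕ, c (k + 1) * u ^ (k + 1) / ((k : ℝ) + 1)) + B
      = -1 / Real.log (1 - u) * ∑' k : ℕ, b (k + 1) * u ^ (k + 1) / ((k : ℝ) + 1)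
  rw [htsum]
  field_simp
  ring
end
end

section
/- Let 𝒳 be a set and σ : 𝒳 → 𝒳 a confined self-map for which limsup_{k→∞} log(σ_k)/k = 0 (i.e. the growth rate Λ equals 1), and assume the Cesàro mean B := 𝒞(σ_k) exists and is strictly positive. Then there exists a constant C > 0 such that N_σ(X) = (C/Γ(B+1)) · X^B · (1 + O(1/log X)) as the integer X → ∞. -/
open Filter Topology Real MeasureTheory Asymptotics
open scoped Classical

noncomputable section

/-! Each prime orbit of length `ℓ` contributes `ℓ ⌊X/ℓ⌋ ≈ X` to `∑_{k ≤ X} σ_k`, so a finite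
Cesàro mean `B` forces finitely many prime orbits, and then `B` is their number `r`. A general
orbit is then a vector `m ∈ ℕ^r` with `∑ m_P ℓ(P) ≤ X`, and comparing this lattice-point count
with the volume `X^r / (r! ∏ ℓ(P))` of the simplex, by induction on `r` through Riemann sums of
`t ↦ t^(r-1)`, gives the claim with `C = 1 / ∏ ℓ(P)` and even a relative error `O(1/X)`. -/

open Finset

theorem mul_pow_mul_sub_le_pow_succ_sub_pow_succ {u v : ℝ} (hu : 0 ≤ u) (huv : u ≤ v) (n : ℕ) :
    (n + 1) * u ^ n * (v - u) ≤ v ^ (n + 1) - u ^ (n + 1) := by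
  rw [← geom_sum₂_mul]
  refine mul_le_mul_of_nonneg_right ?_ (sub_nonneg.2 huv)
  calc (n + 1 : ℝ) * u ^ n = ∑ _i ∈ range (n + 1), u ^ n := by simp
    _ ≤ ∑ i ∈ range (n + 1), v ^ i * u ^ (n + 1 - 1 - i) := sum_le_sum fun i hi => by
      rw [mem_range] at hi
      calc u ^ n = u ^ i * u ^ (n - i) := by rw [← pow_add, Nat.add_sub_cancel' (by omega)]
        _ ≤ v ^ i * u ^ (n + 1 - 1 - i) := by rw [Nat.add_sub_cancel]; gcongr

theorem pow_succ_sub_pow_succ_le {u v : ℝ} (hu : 0 ≤ u) (huv : u ≤ v) (n : ℕ) :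
    v ^ (n + 1) - u ^ (n + 1) ≤ (n + 1) * v ^ n * (v - u) := by
  have h := abs_pow_sub_pow_le v u (n + 1)
  rw [abs_of_nonneg (sub_nonneg.2 (pow_le_pow_left₀ hu huv _)), abs_of_nonneg (sub_nonneg.2 huv),
    abs_of_nonneg (hu.trans huv), abs_of_nonneg hu, max_eq_left huv, Nat.add_sub_cancel] at h
  push_cast at h
  linarith

/-- A left Riemann sum, with step `ℓ`, of `t ↦ (n + 1) t ^ n`, whose integral over `[0, X]` is
`X ^ (n + 1)`. -/
theorem pow_succ_le_mul_sum_pow {ℓ : ℕ} (hℓ : 0 < ℓ) (X n : ℕ) :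
    (X : ℝ) ^ (n + 1) ≤ (n + 1) * ℓ * ∑ j ∈ range (X / ℓ + 1), ((X - j * ℓ : ℕ) : ℝ) ^ n := by
  set x : ℕ → ℝ := fun j => ((X - j * ℓ : ℕ) : ℝ)
  have hstep (j : ℕ) : x j ^ (n + 1) - x (j + 1) ^ (n + 1) ≤ (n + 1) * ℓ * x j ^ n := by
    have h₁ : X - (j + 1) * ℓ ≤ X - j * ℓ := Nat.sub_le_sub_left (by gcongr; omega) X
    have h₂ : X - j * ℓ ≤ X - (j + 1) * ℓ + ℓ := by rw [add_mul, one_mul]; omega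
    have h₁' : x (j + 1) ≤ x j := by simp only [x]; exact_mod_cast h₁
    have h₂' : x j ≤ x (j + 1) + ℓ := by simp only [x]; exact_mod_cast h₂
    calc x j ^ (n + 1) - x (j + 1) ^ (n + 1) ≤ (n + 1) * x j ^ n * (x j - x (j + 1)) :=
          pow_succ_sub_pow_succ_le (by positivity) h₁' n
      _ ≤ (n + 1) * x j ^ n * ℓ := by gcongr; linarith
      _ = (n + 1) * ℓ * x j ^ n := by ring
  have hlast : x (X / ℓ + 1) = 0 := by
    simp only [x, Nat.cast_eq_zero, Nat.sub_eq_zero_iff_le]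
    exact (Nat.lt_succ_self _ |> (Nat.div_lt_iff_lt_mul hℓ).1).le
  calc (X : ℝ) ^ (n + 1) = x 0 ^ (n + 1) - x (X / ℓ + 1) ^ (n + 1) := by
        simp [x, hlast]
    _ = ∑ j ∈ range (X / ℓ + 1), (x j ^ (n + 1) - x (j + 1) ^ (n + 1)) :=
        (sum_range_sub' (fun j => x j ^ (n + 1)) _).symm
    _ ≤ ∑ j ∈ range (X / ℓ + 1), (n + 1) * ℓ * x j ^ n := sum_le_sum fun j _ => hstep j
    _ = _ := by rw [← mul_sum]

/-- A right Riemann sum, with step `ℓ`, of `t ↦ (n + 1) t ^ n`, against its integral over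
`[0, X + ℓ + S]`. -/
theorem mul_sum_add_pow_le {ℓ : ℕ} (X n : ℕ) {S : ℝ} (hS : 0 ≤ S) :
    (n + 1) * ℓ * ∑ j ∈ range (X / ℓ + 1), (((X - j * ℓ : ℕ) : ℝ) + S) ^ n ≤
      (X + ℓ + S) ^ (n + 1) := by
  set y : ℕ → ℝ := fun j => X + ℓ + S - j * ℓ
  have hy (j : ℕ) (hj : j ∈ range (X / ℓ + 1)) : ((X - j * ℓ : ℕ) : ℝ) + S = y (j + 1) := by
    have : j * ℓ ≤ X :=
      (Nat.mul_le_mul_right ℓ (Nat.lt_succ_iff.1 (mem_range.1 hj))).trans (Nat.div_mul_le_self X ℓ)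
    simp only [y]; push_cast [this]; ring
  have hnonneg (j : ℕ) (hj : j ∈ range (X / ℓ + 1)) : 0 ≤ y (j + 1) := by
    rw [← hy j hj]; positivity
  calc (n + 1) * ℓ * ∑ j ∈ range (X / ℓ + 1), (((X - j * ℓ : ℕ) : ℝ) + S) ^ n
      = ∑ j ∈ range (X / ℓ + 1), (n + 1) * y (j + 1) ^ n * (y j - y (j + 1)) := by
        rw [mul_sum]; refine sum_congr rfl fun j hj => ?_
        rw [hy j hj]; simp only [y]; push_cast; ring
    _ ≤ ∑ j ∈ range (X / ℓ + 1), (y j ^ (n + 1) - y (j + 1) ^ (n + 1)) :=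
        sum_le_sum fun j hj => mul_pow_mul_sub_le_pow_succ_sub_pow_succ (hnonneg j hj)
          (by simp only [y]; push_cast; nlinarith [(Nat.cast_nonneg ℓ : (0 : ℝ) ≤ ℓ)]) n
    _ = y 0 ^ (n + 1) - y (X / ℓ + 1) ^ (n + 1) := sum_range_sub' (fun j => y j ^ (n + 1)) _
    _ ≤ (X + ℓ + S) ^ (n + 1) := by
        have := hnonneg (X / ℓ) (self_mem_range_succ _)
        simp only [y, CharP.cast_eq_zero, zero_mul, sub_zero] at this ⊢
        linarith [pow_nonneg this (n + 1)]

section LatticeCount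

variable {ι : Type*} [Fintype ι]

def latticeCount (w : ι → ℕ) (X : ℕ) : ℕ :=
  Nat.card {m : ι → ℕ // ∑ i, m i * w i ≤ X}

theorem finite_latticePoints {w : ι → ℕ} (hw : ∀ i, 0 < w i) (X : ℕ) :
    Finite {m : ι → ℕ // ∑ i, m i * w i ≤ X} :=
  Set.Finite.to_subtype <| (Set.finite_Iic fun _ => X).subset fun m hm i =>
    calc m i ≤ m i * w i := Nat.le_mul_of_pos_right _ (hw i)
      _ ≤ ∑ j, m j * w j := single_le_sum (f := fun j => m j * w j) (fun _ _ => Nat.zero_le _)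
        (mem_univ i)
      _ ≤ X := hm

theorem latticeCount_comp_equiv {κ : Type*} [Fintype κ] (e : κ ≃ ι) (w : ι → ℕ) (X : ℕ) :
    latticeCount (w ∘ e) X = latticeCount w X :=
  Nat.card_congr <| Equiv.subtypeEquiv (e.arrowCongr (Equiv.refl ℕ)) fun m => by
    simp [← e.sum_comp]

theorem latticeCount_of_isEmpty [IsEmpty ι] (w : ι → ℕ) (X : ℕ) : latticeCount w X = 1 := by
  simp [latticeCount]

def latticePointsOptionEquiv (w : Option ι → ℕ) (hw : 0 < w none) (X : ℕ) :
    {m : Option ι → ℕ // ∑ o, m o * w o ≤ X} ≃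
      Σ j : Fin (X / w none + 1), {m : ι → ℕ // ∑ i, m i * w (some i) ≤ X - j * w none} where
  toFun m := ⟨⟨m.1 none, by
      have := m.2; rw [Fintype.sum_option] at this
      exact Nat.lt_succ_of_le <| (Nat.le_div_iff_mul_le hw).2 (by omega)⟩,
    ⟨fun i => m.1 (some i), by
      show ∑ i, m.1 (some i) * w (some i) ≤ X - m.1 none * w none
      have := m.2; rw [Fintype.sum_option] at this; omega⟩⟩
  invFun p := ⟨fun o => o.elim p.1 p.2.1, by
    have hj : (p.1 : ℕ) * w none ≤ X :=
      (Nat.mul_le_mul_right _ (Nat.le_of_lt_succ p.1.2)).trans (Nat.div_mul_le_self X _)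
    have := p.2.2
    rw [Fintype.sum_option]
    simp only [Option.elim]
    omega⟩
  left_inv m := Subtype.ext <| funext fun o => by cases o <;> rfl
  right_inv p := Sigma.subtype_ext rfl rfl

theorem latticeCount_option {w : Option ι → ℕ} (hw : ∀ o, 0 < w o) (X : ℕ) :
    latticeCount w X =
      ∑ j ∈ range (X / w none + 1), latticeCount (w ∘ some) (X - j * w none) := by
  have (j : Fin (X / w none + 1)) :
      Finite {m : ι → ℕ // ∑ i, m i * w (some i) ≤ X - j * w none} :=
    finite_latticePoints (fun i => hw (some i)) _
  rw [latticeCount, Nat.card_congr (latticePointsOptionEquiv w (hw none) X), Nat.card_sigma,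
    ← Fin.sum_univ_eq_sum_range (fun j => latticeCount (w ∘ some) (X - j * w none))]
  rfl

open Nat in
theorem latticeCount_option_mul {w : Option ι → ℕ} (hw : ∀ o, 0 < w o)
    (X : ℕ) :
    (latticeCount w X : ℝ) * (Fintype.card (Option ι))! * ∏ o, (w o : ℝ) =
      (Fintype.card ι + 1) * w none * ∑ j ∈ range (X / w none + 1),
        (latticeCount (w ∘ some) (X - j * w none) : ℝ) * (Fintype.card ι)! *
          ∏ i, ((w ∘ some) i : ℝ) := by
  rw [latticeCount_option hw, Fintype.card_option, Nat.factorial_succ, Fintype.prod_option]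
  push_cast
  simp only [sum_mul, mul_sum]
  exact sum_congr rfl fun j _ => by simp only [Function.comp_apply]; ring

open Nat in
theorem pow_card_le_latticeCount_mul {w : ι → ℕ} (hw : ∀ i, 0 < w i)
    (X : ℕ) :
    (X : ℝ) ^ Fintype.card ι ≤ latticeCount w X * (Fintype.card ι)! * ∏ i, (w i : ℝ) := by
  refine Fintype.induction_empty_option (P := fun ι _ => ∀ w : ι → ℕ, (∀ i, 0 < w i) → ∀ X : ℕ,
    (X : ℝ) ^ Fintype.card ι ≤ latticeCount w X * (Fintype.card ι)! * ∏ i, (w i : ℝ))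
    ?_ ?_ ?_ ι w hw X
  · intro α β _ e ih w hw X
    let := Fintype.ofEquiv β e.symm
    have := ih (w ∘ e) (fun i => hw (e i)) X
    simp only [Function.comp_apply] at this
    rwa [latticeCount_comp_equiv, Fintype.card_congr e, e.prod_comp (fun i => (w i : ℝ))] at this
  · simp [latticeCount_of_isEmpty]
  · intro α _ ih w hw X
    rw [latticeCount_option_mul hw, Fintype.card_option]
    calc (X : ℝ) ^ (Fintype.card α + 1)
        ≤ (Fintype.card α + 1) * w none *
            ∑ j ∈ range (X / w none + 1), ((X - j * w none : ℕ) : ℝ) ^ Fintype.card α := by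
          simpa using pow_succ_le_mul_sum_pow (hw none) X (Fintype.card α)
      _ ≤ _ := by
          gcongr with j
          exact ih _ (fun i => hw (some i)) _

open Nat in
theorem latticeCount_mul_le {w : ι → ℕ} (hw : ∀ i, 0 < w i) (X : ℕ) :
    latticeCount w X * (Fintype.card ι)! * ∏ i, (w i : ℝ) ≤
      (X + ∑ i, (w i : ℝ)) ^ Fintype.card ι := by
  refine Fintype.induction_empty_option (P := fun ι _ => ∀ w : ι → ℕ, (∀ i, 0 < w i) → ∀ X : ℕ,
    latticeCount w X * (Fintype.card ι)! * ∏ i, (w i : ℝ) ≤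
      (X + ∑ i, (w i : ℝ)) ^ Fintype.card ι)
    ?_ ?_ ?_ ι w hw X
  · intro α β _ e ih w hw X
    let := Fintype.ofEquiv β e.symm
    have := ih (w ∘ e) (fun i => hw (e i)) X
    simp only [Function.comp_apply] at this
    rwa [latticeCount_comp_equiv, Fintype.card_congr e, e.prod_comp (fun i => (w i : ℝ)),
      e.sum_comp (fun i => (w i : ℝ))] at this
  · simp [latticeCount_of_isEmpty]
  · intro α _ ih w hw X
    rw [latticeCount_option_mul hw, Fintype.card_option, Fintype.sum_option, ← add_assoc]
    calc _ ≤ (Fintype.card α + 1) * w none * ∑ j ∈ range (X / w none + 1),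
            (((X - j * w none : ℕ) : ℝ) + ∑ i, ((w ∘ some) i : ℝ)) ^ Fintype.card α := by
          gcongr with j
          exact ih _ (fun i => hw (some i)) _
      _ ≤ _ := by
          simpa using mul_sum_add_pow_le X (Fintype.card α)
            (sum_nonneg fun i _ => Nat.cast_nonneg ((w ∘ some) i))

end LatticeCount

theorem one_add_pow_sub_one_le {t : ℝ} (ht₀ : 0 ≤ t) (ht₁ : t ≤ 1) (r : ℕ) :
    (1 + t) ^ r - 1 ≤ r * 2 ^ r * t := by
  have h := abs_pow_sub_pow_le (1 + t) 1 r
  rw [one_pow, add_sub_cancel_left, abs_of_nonneg ht₀, abs_one,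
    abs_of_nonneg (by linarith : (0 : ℝ) ≤ 1 + t), max_eq_left (by linarith)] at h
  calc (1 + t) ^ r - 1 ≤ t * r * (1 + t) ^ (r - 1) := (le_abs_self _).trans h
    _ ≤ t * r * 2 ^ r := by
        gcongr
        calc (1 + t) ^ (r - 1) ≤ 2 ^ (r - 1) := by gcongr; linarith
          _ ≤ 2 ^ r := pow_le_pow_right₀ one_le_two (Nat.sub_le r 1)
    _ = r * 2 ^ r * t := by ring

theorem isBigO_div_pow_sub_one {f : ℕ → ℝ} {r : ℕ} {S : ℝ} (hS : 0 ≤ S)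
    (hlo : ∀ X : ℕ, (X : ℝ) ^ r ≤ f X) (hhi : ∀ X : ℕ, f X ≤ (X + S) ^ r) :
    (fun X : ℕ => f X / (X : ℝ) ^ r - 1) =O[atTop] fun X : ℕ => (X : ℝ)⁻¹ := by
  refine Asymptotics.IsBigO.of_bound (r * 2 ^ r * S) ?_
  filter_upwards [eventually_ge_atTop ⌈S⌉₊, eventually_gt_atTop 0] with X hSX hX
  have hX : (0 : ℝ) < X := by exact_mod_cast hX
  have hSX : S ≤ X := (Nat.le_ceil S).trans (by exact_mod_cast hSX)
  have hXr : (0 : ℝ) < (X : ℝ) ^ r := by positivity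
  have hE₀ : 0 ≤ f X / (X : ℝ) ^ r - 1 := by
    rw [sub_nonneg, one_le_div hXr]; exact hlo X
  have hE₁ : f X / (X : ℝ) ^ r - 1 ≤ (1 + S / X) ^ r - 1 := by
    rw [one_add_div hX.ne', div_pow]; gcongr; exact hhi X
  rw [Real.norm_of_nonneg hE₀, Real.norm_of_nonneg (inv_nonneg.2 hX.le)]
  calc f X / (X : ℝ) ^ r - 1 ≤ r * 2 ^ r * (S / X) :=
        hE₁.trans (one_add_pow_sub_one_le (by positivity) ((div_le_one hX).2 hSX) r)
    _ = r * 2 ^ r * S * (X : ℝ)⁻¹ := by ring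

theorem isBigO_inv_one_div_log :
    (fun X : ℕ => (X : ℝ)⁻¹) =O[atTop] fun X : ℕ => 1 / Real.log X := by
  refine Asymptotics.IsBigO.of_bound 1 ?_
  filter_upwards [eventually_ge_atTop 2] with X hX
  have hX : (2 : ℝ) ≤ X := by exact_mod_cast hX
  have hlog : 0 < Real.log X := Real.log_pos (by linarith)
  rw [Real.norm_of_nonneg (by positivity), Real.norm_of_nonneg (by positivity), one_mul, one_div]
  exact inv_anti₀ hlog (Real.log_le_self (by linarith))

namespace Function

variable {α : Type*} {f : α → α} {x : α}

theorem range_iterate_eq_image_Iio (hx : x ∈ periodicPts f) :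
    Set.range (f^[·] x) = (f^[·] x) '' Set.Iio (minimalPeriod f x) := by
  refine (Set.image_subset_range _ _).antisymm' ?_
  rintro _ ⟨n, rfl⟩
  exact ⟨n % minimalPeriod f x, Nat.mod_lt _ (minimalPeriod_pos_of_mem_periodicPts hx),
    iterate_mod_minimalPeriod_eq⟩

theorem ncard_range_iterate (hx : x ∈ periodicPts f) :
    (Set.range (f^[·] x)).ncard = minimalPeriod f x := by
  rw [range_iterate_eq_image_Iio hx, iterate_injOn_Iio_minimalPeriod.ncard_image,
    Set.ncard_Iio_nat]

theorem finite_range_iterate (hx : x ∈ periodicPts f) : (Set.range (f^[·] x)).Finite := by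
  rw [range_iterate_eq_image_Iio hx]
  exact (Set.finite_Iio _).image _

theorem image_range_iterate (hx : x ∈ periodicPts f) :
    f '' Set.range (f^[·] x) = Set.range (f^[·] x) := by
  rw [← Set.range_comp]
  refine Set.Subset.antisymm ?_ ?_
  · exact Set.range_subset_iff.2 fun n => ⟨n + 1, iterate_succ_apply' f n x⟩
  rintro _ ⟨n, rfl⟩
  refine ⟨n + minimalPeriod f x - 1, ?_⟩
  have := minimalPeriod_pos_of_mem_periodicPts hx
  simp only [comp_apply]
  rw [← iterate_succ_apply' f, Nat.succ_eq_add_one, Nat.sub_add_cancel (by omega),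
    iterate_add_minimalPeriod_eq]

theorem range_iterate_iterate (hx : x ∈ periodicPts f) (j : ℕ) :
    Set.range (f^[·] (f^[j] x)) = Set.range (f^[·] x) := by
  refine Set.Subset.antisymm ?_ ?_
  · exact Set.range_subset_iff.2 fun n => ⟨n + j, iterate_add_apply f n j x⟩
  rintro _ ⟨n, rfl⟩
  refine ⟨n + (minimalPeriod f x - 1) * j, ?_⟩
  have := minimalPeriod_pos_of_mem_periodicPts hx
  dsimp only
  rw [← iterate_add_apply, add_assoc, ← Nat.succ_mul, Nat.succ_eq_add_one, Nat.sub_add_cancel this,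
    iterate_add_apply, ((isPeriodicPt_minimalPeriod f x).mul_const j).eq]

end Function

open Function

theorem isPrimeOrbit_iff {𝒳 : Type*} {σ : 𝒳 → 𝒳} {P : Set 𝒳} :
    IsPrimeOrbit σ P ↔ ∃ x ∈ periodicPts σ, P = Set.range (σ^[·] x) := by
  constructor
  · rintro ⟨x, ℓ, hℓ, hP, -, hinv⟩
    have hxP : x ∈ P := hP ▸ ⟨0, hℓ, rfl⟩
    have hmaps : Set.MapsTo σ P P := fun y hy => hinv ▸ Set.mem_image_of_mem σ hy
    obtain ⟨y, hyP, hyx⟩ : x ∈ σ '' P := by rwa [hinv]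
    rw [hP] at hyP
    obtain ⟨i, -, rfl⟩ := hyP
    refine ⟨x, mk_mem_periodicPts i.succ_pos ?_,
      Set.Subset.antisymm (hP ▸ Set.image_subset_range _ _) ?_⟩
    · rwa [IsPeriodicPt, IsFixedPt, iterate_succ_apply']
    · rintro _ ⟨n, rfl⟩
      exact hmaps.iterate n hxP
  · rintro ⟨x, hx, rfl⟩
    exact ⟨x, minimalPeriod σ x, minimalPeriod_pos_of_mem_periodicPts hx,
      range_iterate_eq_image_Iio hx, ncard_range_iterate hx, image_range_iterate hx⟩

namespace PrimeOrbit

variable {𝒳 : Type*} {σ : 𝒳 → 𝒳}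

theorem eq_range_of_mem (P : PrimeOrbit σ) {y : 𝒳} (hy : y ∈ P.1) :
    y ∈ periodicPts σ ∧ P.1 = Set.range (σ^[·] y) := by
  obtain ⟨x, hx, hP⟩ := isPrimeOrbit_iff.1 P.2
  rw [hP] at hy ⊢
  obtain ⟨j, rfl⟩ := hy
  exact ⟨mk_mem_periodicPts (minimalPeriod_pos_of_mem_periodicPts hx)
    ((isPeriodicPt_minimalPeriod σ x).apply_iterate j), (range_iterate_iterate hx j).symm⟩

theorem nonempty (P : PrimeOrbit σ) : P.1.Nonempty := by
  obtain ⟨x, -, hP⟩ := isPrimeOrbit_iff.1 P.2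
  exact hP ▸ Set.range_nonempty _

theorem finite (P : PrimeOrbit σ) : P.1.Finite := by
  obtain ⟨y, hy⟩ := P.nonempty
  obtain ⟨hy, hP⟩ := P.eq_range_of_mem hy
  exact hP ▸ finite_range_iterate hy

theorem orbitLen_eq_minimalPeriod (P : PrimeOrbit σ) {y : 𝒳} (hy : y ∈ P.1) :
    orbitLen P = minimalPeriod σ y := by
  obtain ⟨hy, hP⟩ := P.eq_range_of_mem hy
  rw [orbitLen, hP, ncard_range_iterate hy]

theorem orbitLen_pos (P : PrimeOrbit σ) : 0 < orbitLen P := by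
  obtain ⟨y, hy⟩ := P.nonempty
  rw [P.orbitLen_eq_minimalPeriod hy]
  exact minimalPeriod_pos_of_mem_periodicPts (P.eq_range_of_mem hy).1

theorem eq_of_mem {P Q : PrimeOrbit σ} {y : 𝒳} (hP : y ∈ P.1) (hQ : y ∈ Q.1) : P = Q :=
  Subtype.ext <| (P.eq_range_of_mem hP).2.trans (Q.eq_range_of_mem hQ).2.symm

theorem setOf_iterate_eq_self {k : ℕ} (hk : 0 < k) :
    {x | σ^[k] x = x} = ⋃ (P : PrimeOrbit σ) (_ : orbitLen P ∣ k), P.1 := by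
  ext x
  simp only [Set.mem_ofPred_eq, Set.mem_iUnion, exists_prop]
  constructor
  · intro hx
    have hper : x ∈ periodicPts σ := mk_mem_periodicPts hk hx
    let P : PrimeOrbit σ := ⟨_, isPrimeOrbit_iff.2 ⟨x, hper, rfl⟩⟩
    have hxP : x ∈ P.1 := ⟨0, rfl⟩
    exact ⟨P, P.orbitLen_eq_minimalPeriod hxP ▸ IsPeriodicPt.minimalPeriod_dvd hx, hxP⟩
  · rintro ⟨P, hdvd, hx⟩
    exact isPeriodicPt_iff_minimalPeriod_dvd.2 (P.orbitLen_eq_minimalPeriod hx ▸ hdvd)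

theorem ncard_biUnion (T : Finset (PrimeOrbit σ)) :
    (⋃ P ∈ T, P.1).ncard = ∑ P ∈ T, orbitLen P := by
  rw [← T.set_biUnion_coe, Set.Finite.ncard_biUnion T.finite_toSet (fun P _ => P.finite)
    (fun P _ Q _ hPQ => Set.disjoint_left.2 fun _ hP hQ => hPQ (eq_of_mem hP hQ)),
    finsum_mem_coe_finset]
  rfl

end PrimeOrbit

theorem sum_Icc_sum_filter_dvd {ι : Type*} (T : Finset ι) (w : ι → ℕ) (X : ℕ) :
    ∑ k ∈ Icc 1 X, ∑ i ∈ T with w i ∣ k, w i = ∑ i ∈ T, w i * (X / w i) := by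
  simp_rw [sum_filter]
  rw [sum_comm]
  refine sum_congr rfl fun i _ => ?_
  rw [← sum_filter, sum_const, smul_eq_mul, mul_comm, show Icc 1 X = Ioc 0 X from
    Icc_add_one_left_eq_Ioc 0 X, Nat.Ioc_filter_dvd_card_eq_div]

theorem tendsto_mul_div_div_self {ℓ : ℕ} (hℓ : 0 < ℓ) :
    Tendsto (fun X : ℕ => ((ℓ * (X / ℓ) : ℕ) : ℝ) / X) atTop (𝓝 1) := by
  refine (tendsto_nat_floor_div_atTop.comp
    (tendsto_natCast_atTop_atTop.atTop_div_const (by positivity : (0 : ℝ) < ℓ))).congr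
    fun X => ?_
  simp only [Function.comp_apply, Nat.floor_div_eq_div]
  push_cast
  rw [div_div_eq_mul_div, mul_comm]

theorem tendsto_sum_Icc_sum_filter_dvd_div {ι : Type*} (T : Finset ι) {w : ι → ℕ}
    (hw : ∀ i ∈ T, 0 < w i) :
    Tendsto (fun X : ℕ => ((∑ k ∈ Icc 1 X, ∑ i ∈ T with w i ∣ k, w i : ℕ) : ℝ) / X) atTop
      (𝓝 T.card) := by
  simp_rw [sum_Icc_sum_filter_dvd, Nat.cast_sum, sum_div]
  simpa using tendsto_finsetSum T fun i hi => tendsto_mul_div_div_self (hw i hi)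

section Orbits

variable {𝒳 : Type*} {σ : 𝒳 → 𝒳}

theorem fixCount_eq_ncard (k : ℕ) : fixCount σ k = {x | σ^[k] x = x}.ncard :=
  Nat.card_coe_set_eq _

theorem sum_orbitLen_le_fixCount (hσ : Confined σ) {k : ℕ} (hk : 0 < k)
    (T : Finset (PrimeOrbit σ)) :
    ∑ P ∈ T with orbitLen P ∣ k, orbitLen P ≤ fixCount σ k := by
  rw [← PrimeOrbit.ncard_biUnion, fixCount_eq_ncard]
  refine Set.ncard_le_ncard ?_ (hσ k hk)
  rw [PrimeOrbit.setOf_iterate_eq_self hk]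
  simp only [Set.iUnion_subset_iff, mem_filter]
  exact fun P hP => Set.subset_biUnion_of_mem (u := fun P : PrimeOrbit σ => P.1) hP.2

theorem fixCount_eq_sum_orbitLen [Fintype (PrimeOrbit σ)] {k : ℕ} (hk : 0 < k) :
    fixCount σ k = ∑ P : PrimeOrbit σ with orbitLen P ∣ k, orbitLen P := by
  rw [← PrimeOrbit.ncard_biUnion, fixCount_eq_ncard, PrimeOrbit.setOf_iterate_eq_self hk]
  simp

theorem card_le_of_cesaroLim (hσ : Confined σ) {B : ℝ}
    (hB : CesaroLim (fun k => (fixCount σ k : ℝ)) B) (T : Finset (PrimeOrbit σ)) :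
    (T.card : ℝ) ≤ B := by
  refine le_of_tendsto_of_tendsto' (tendsto_sum_Icc_sum_filter_dvd_div T
    (fun P _ => P.orbitLen_pos)) hB fun X => ?_
  gcongr
  push_cast
  exact sum_le_sum fun k hk => by
    exact_mod_cast sum_orbitLen_le_fixCount hσ (mem_Icc.1 hk).1 T

theorem finite_primeOrbit (hσ : Confined σ) {B : ℝ}
    (hB : CesaroLim (fun k => (fixCount σ k : ℝ)) B) : Finite (PrimeOrbit σ) := by
  by_contra h
  rw [not_finite_iff_infinite] at h
  obtain ⟨T, hT⟩ := Infinite.exists_subset_card_eq (PrimeOrbit σ) (⌈B⌉₊ + 1)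
  have := card_le_of_cesaroLim hσ hB T
  rw [hT, Nat.cast_add_one] at this
  linarith [Nat.le_ceil B]

theorem cesaroLim_fixCount_eq_card [Fintype (PrimeOrbit σ)] {B : ℝ}
    (hB : CesaroLim (fun k => (fixCount σ k : ℝ)) B) :
    B = Fintype.card (PrimeOrbit σ) := by
  refine tendsto_nhds_unique hB ((tendsto_sum_Icc_sum_filter_dvd_div univ
    (fun P _ => P.orbitLen_pos)).congr fun X => ?_)
  push_cast
  congr 1
  exact sum_congr rfl fun k hk => by
    exact_mod_cast (fixCount_eq_sum_orbitLen (mem_Icc.1 hk).1).symm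

theorem Ncount_eq_latticeCount [Fintype (PrimeOrbit σ)] (X : ℕ) :
    Ncount σ X = latticeCount (orbitLen (σ := σ)) X :=
  Nat.card_congr <| Equiv.subtypeEquiv Finsupp.equivFunOnFinite fun O => by
    rw [genLen, Finsupp.sum_fintype _ _ fun P => zero_mul _]
    rfl

end Orbits

theorem orbit_count_asymptotics_growth_one_general {𝒳 : Type*} (σ : 𝒳 → 𝒳) (hσ : Confined σ)
    (B : ℝ) (hB : CesaroLim (fun k => (fixCount σ k : ℝ)) B) :
    ∃ C : ℝ, 0 < C ∧ ∃ E : ℕ → ℝ,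
      (E =O[atTop] fun X : ℕ => 1 / Real.log (X : ℝ)) ∧
      ∀ᶠ X : ℕ in atTop,
        (Ncount σ X : ℝ) = C / Real.Gamma (B + 1) * (X : ℝ) ^ B * (1 + E X) := by
  have := finite_primeOrbit hσ hB
  let := Fintype.ofFinite (PrimeOrbit σ)
  set r := Fintype.card (PrimeOrbit σ)
  set W := ∏ P : PrimeOrbit σ, (orbitLen P : ℝ)
  have hW : 0 < W := prod_pos fun P _ => by exact_mod_cast P.orbitLen_pos
  refine ⟨W⁻¹, inv_pos.2 hW, fun X => Ncount σ X * r.factorial * W / (X : ℝ) ^ r - 1, ?_, ?_⟩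
  · simp_rw [Ncount_eq_latticeCount]
    exact (isBigO_div_pow_sub_one (sum_nonneg fun P _ => Nat.cast_nonneg (orbitLen P))
      (pow_card_le_latticeCount_mul PrimeOrbit.orbitLen_pos)
      (latticeCount_mul_le PrimeOrbit.orbitLen_pos)).trans isBigO_inv_one_div_log
  · filter_upwards [eventually_ne_atTop 0] with X hX
    rw [cesaroLim_fixCount_eq_card hB, Real.rpow_natCast, Real.Gamma_nat_eq_factorial]
    field_simp
    ring

/-- Proposition (N1): for a confined self-map of growth rate `Λ = 1` whose fixed-point
counts have a positive Cesàro mean `B = 𝒞(σ_k)`, one has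
`N_σ(X) = (C/Γ(B+1)) · X^B · (1 + O(1/log X))` for some constant `C > 0`. -/
theorem orbit_count_asymptotics_growth_one {𝒳 : Type*} (σ : 𝒳 → 𝒳) (hσ : Confined σ)
    (hΛ : Filter.limsup (growthSeq σ) atTop = (0 : EReal))
    (B : ℝ) (hB : CesaroLim (fun k => (fixCount σ k : ℝ)) B) (hBpos : 0 < B) :
    ∃ C : ℝ, 0 < C ∧ ∃ E : ℕ → ℝ,
      (E =O[atTop] fun X : ℕ => 1 / Real.log (X : ℝ)) ∧
      ∀ᶠ X : ℕ in atTop,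
        (Ncount σ X : ℝ) = C / Real.Gamma (B + 1) * (X : ℝ) ^ B * (1 + E X) :=
  orbit_count_asymptotics_growth_one_general σ hσ B hB
end
end

section
/- Let p be an odd prime and n ≥ 2 an integer, and set σ_k := (n^k − 1)² · |n^k − 1|_p, which is the number of fixed points of the k-th iterate of the multiplication-by-n map on an ordinary elliptic curve over the algebraic closure of 𝔽_p; the associated growth rate is Λ = n². (i) If n is coprime to p, let d be the multiplicative order of n modulo p and e := v_p(n^d − 1); then the Cesàro mean B := 𝒞(σ_k/n^{2k}) = 𝒞(|n^k − 1|_p) exists and equals 1 − (1/d)·(1 − p/(p^e(p+1))), which is a rational number different from 1. (ii) If p divides n, then B = 1. -/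
/-!
Let `d` be the order of `n` mod `p` and `e = v_p(n^d - 1)`. Then `|n^k - 1|_p = 1` unless
`d ∣ k`, and lifting the exponent gives `|n^(dm) - 1|_p = p^(-e) |m|_p`. Hence the partial sums
`S(X) = ∑_{k ≤ X} |n^k - 1|_p` satisfy `S(X) = X - ⌊X/d⌋ + p^(-e) U(⌊X/d⌋)` with
`U(M) = ∑_{m ≤ M} |m|_p`, and the same splitting with `d = p` gives `U(M) = M p/(p+1) + O(1)`.
So `S(X) = B X + O(1)`. Since `(n^k - 1)² / n^(2k) → 1`, the sequence `σ_k / n^(2k)` has the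
same Cesàro mean. If `p ∣ n`, then `|n^k - 1|_p = 1` for every `k ≥ 1`.
-/

open Filter Topology Real

noncomputable section

namespace CesaroLim

theorem of_tendsto {a : ℕ → ℝ} {B : ℝ} (h : Tendsto a atTop (𝓝 B)) : CesaroLim a B := by
  have hshift := (h.comp (tendsto_add_atTop_nat 1)).cesaro
  refine hshift.congr fun X => ?_
  rw [← Finset.Ico_add_one_right_eq_Icc, Finset.sum_Ico_eq_sum_range, Nat.add_sub_cancel,
    div_eq_inv_mul]
  simp only [Function.comp_apply, add_comm]

theorem add {a b : ℕ → ℝ} {A B : ℝ} (ha : CesaroLim a A) (hb : CesaroLim b B) :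
    CesaroLim (fun k => a k + b k) (A + B) :=
  (Tendsto.add ha hb).congr fun X => by rw [Finset.sum_add_distrib, add_div]

theorem congr_sub {a b : ℕ → ℝ} {B : ℝ} (ha : CesaroLim a B)
    (hab : Tendsto (fun k => b k - a k) atTop (𝓝 0)) : CesaroLim b B := by
  simpa using ha.add (of_tendsto hab)

theorem mul_tendsto_one {a g : ℕ → ℝ} {B C : ℝ} (ha : CesaroLim a B) (hC : ∀ k, |a k| ≤ C)
    (hg : Tendsto g atTop (𝓝 1)) : CesaroLim (fun k => a k * g k) B := by
  refine ha.congr_sub ?_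
  have hg0 : Tendsto (fun k => g k - 1) atTop (𝓝 0) := by simpa using hg.sub_const 1
  have ha_bdd : IsBoundedUnder (· ≤ ·) atTop ((‖·‖) ∘ a) := isBoundedUnder_of ⟨C, hC⟩
  exact (isBoundedUnder_le_mul_tendsto_zero ha_bdd hg0).congr fun k => by ring

theorem of_abs_sum_sub_le {a : ℕ → ℝ} {B C : ℝ}
    (h : ∀ X : ℕ, |∑ k ∈ Finset.Icc 1 X, a k - B * X| ≤ C) : CesaroLim a B := by
  have hdev : Tendsto (fun X : ℕ => (∑ k ∈ Finset.Icc 1 X, a k) / X - B) atTop (𝓝 0) := by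
    refine squeeze_zero_norm' ?_ (tendsto_const_div_atTop_nhds_zero_nat C)
    filter_upwards [eventually_gt_atTop 0] with X hX
    have hX0 : (0 : ℝ) < X := by exact_mod_cast hX
    rw [Real.norm_eq_abs, div_sub' hX0.ne', abs_div, abs_of_pos hX0, mul_comm]
    gcongr
    exact h X
  simpa [CesaroLim] using hdev.add_const B

end CesaroLim

theorem abs_inv_pow_le_one {p : ℕ} (hp : p ≠ 0) (v : ℕ) : |((p : ℝ) ^ v)⁻¹| ≤ 1 := by
  rw [abs_of_pos (by positivity)]
  exact inv_le_one_of_one_le₀ (one_le_pow₀ (by exact_mod_cast Nat.one_le_iff_ne_zero.mpr hp))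

theorem tendsto_sq_pow_sub_one_div_pow {x : ℝ} (hx : 1 < x) :
    Tendsto (fun k : ℕ => (x ^ k - 1) ^ 2 / x ^ (2 * k)) atTop (𝓝 1) := by
  have h : Tendsto (fun k : ℕ => (1 - x⁻¹ ^ k) ^ 2) atTop (𝓝 ((1 - 0) ^ 2)) :=
    ((tendsto_pow_atTop_nhds_zero_of_lt_one (by positivity)
      (inv_lt_one_of_one_lt₀ hx)).const_sub 1).pow 2
  refine (by simpa using h : Tendsto _ _ _).congr fun k => ?_
  have : x ^ k ≠ 0 := by positivity
  rw [pow_mul', ← div_pow, sub_div, div_self this, one_div]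

theorem cesaroLim_sq_pow_sub_one_mul_div_pow {x : ℝ} (hx : 1 < x) {a : ℕ → ℝ} {B : ℝ}
    (ha : CesaroLim a B) (ha1 : ∀ k, |a k| ≤ 1) :
    CesaroLim (fun k => ((x ^ k - 1) ^ 2 * a k) / x ^ (2 * k)) B := by
  convert ha.mul_tendsto_one ha1 (tendsto_sq_pow_sub_one_div_pow hx) using 2 with k
  ring

theorem sum_Icc_split_multiples {d : ℕ} {f g : ℕ → ℝ} {c : ℝ}
    (hf : ∀ k, 1 ≤ k → ¬ d ∣ k → f k = 1) (hfg : ∀ m, 1 ≤ m → f (d * m) = c * g m) (X : ℕ) :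
    ∑ k ∈ Finset.Icc 1 X, f k = (X - (X / d : ℕ)) + c * ∑ m ∈ Finset.Icc 1 (X / d), g m := by
  induction X with
  | zero => simp
  | succ X ih =>
    rw [Finset.sum_Icc_succ_top (by omega), ih, Nat.succ_div]
    by_cases h : d ∣ X + 1
    · have hX : X + 1 = d * (X / d + 1) := by
        rw [← Nat.succ_div_of_dvd h, Nat.mul_div_cancel' h]
      have hfX : f (X + 1) = c * g (X / d + 1) := by rw [hX]; exact hfg _ (Nat.le_add_left 1 _)
      rw [if_pos h, Finset.sum_Icc_succ_top (Nat.le_add_left 1 _), hfX]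
      push_cast
      ring
    · rw [if_neg h, add_zero, hf _ (by omega) h]
      push_cast
      ring

theorem abs_sub_le_of_eq_sub_div_add {d X : ℕ} (hd : 0 < d) {S t a c : ℝ}
    (hS : S = X - (X / d : ℕ) + c * t) :
    |S - (1 - (1 - c * a) / d) * X| ≤ |1 - c * a| + |c| * |t - a * (X / d : ℕ)| := by
  have hd0 : (0 : ℝ) < d := by exact_mod_cast hd
  have hX : (X : ℝ) = d * (X / d : ℕ) + (X % d : ℕ) := by exact_mod_cast (Nat.div_add_mod X d).symm
  have hr : |((X % d : ℕ) : ℝ) / d| ≤ 1 := by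
    rw [abs_of_nonneg (by positivity), div_le_one hd0]
    exact_mod_cast (Nat.mod_lt X hd).le
  have hsplit : S - (1 - (1 - c * a) / d) * X
      = ((X % d : ℕ) / d) * (1 - c * a) + c * (t - a * (X / d : ℕ)) := by
    rw [hS, hX]
    field_simp
    ring
  calc |S - (1 - (1 - c * a) / d) * X|
      ≤ |((X % d : ℕ) : ℝ) / d| * |1 - c * a| + |c| * |t - a * (X / d : ℕ)| := by
        rw [hsplit, ← abs_mul, ← abs_mul]
        exact abs_add_le _ _
    _ ≤ |1 - c * a| + |c| * |t - a * (X / d : ℕ)| := by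
        gcongr
        exact mul_le_of_le_one_left (abs_nonneg _) hr

theorem abs_sum_Icc_inv_pow_padicValNat_sub_le {p : ℕ} (hp : p.Prime) (M : ℕ) :
    |∑ m ∈ Finset.Icc 1 M, ((p : ℝ) ^ padicValNat p m)⁻¹ - p / (p + 1) * M| ≤ 2 := by
  have : Fact p.Prime := ⟨hp⟩
  have hp2 : (2 : ℝ) ≤ p := by exact_mod_cast hp.two_le
  have hrec := sum_Icc_split_multiples (d := p) (f := fun m => ((p : ℝ) ^ padicValNat p m)⁻¹)
    (c := (p : ℝ)⁻¹)
    (fun k _ hk => by simp [padicValNat.eq_zero_of_not_dvd hk])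
    (fun m hm => by
      rw [padicValNat.mul hp.ne_zero (by omega), padicValNat.self hp.one_lt, pow_add, pow_one,
        mul_inv])
  have hca : 1 - (p : ℝ)⁻¹ * (p / (p + 1)) = p / (p + 1) := by
    field_simp
    ring
  have hslope : 1 - (p / (p + 1) : ℝ) / p = p / (p + 1) := by
    field_simp
    ring
  have hp1 : |(p / (p + 1) : ℝ)| ≤ 1 := by
    rw [abs_of_pos (by positivity), div_le_one (by positivity)]
    linarith
  have hpinv : |(p : ℝ)⁻¹| ≤ 1 / 2 := by
    rw [abs_inv, abs_of_pos (by positivity), one_div]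
    exact inv_anti₀ (by norm_num) hp2
  induction M using Nat.strong_induction_on with
  | _ M ih =>
    rcases M.eq_zero_or_pos with rfl | hM
    · simp
    have := abs_sub_le_of_eq_sub_div_add hp.pos (a := p / (p + 1)) (hrec M)
    rw [hca, hslope] at this
    calc _ ≤ _ := this
      _ ≤ 1 + 1 / 2 * 2 := by gcongr; exact ih (M / p) (Nat.div_lt_self hM hp.one_lt)
      _ = 2 := by norm_num

theorem orderOf_natCast_pos {p n : ℕ} [NeZero p] (h : n.Coprime p) : 0 < orderOf (n : ZMod p) := by
  rw [← ZMod.coe_unitOfCoprime n h, orderOf_units]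
  exact orderOf_pos _

theorem dvd_pow_sub_one_iff_orderOf_dvd {p n : ℕ} (hn : 0 < n) (k : ℕ) :
    p ∣ n ^ k - 1 ↔ orderOf (n : ZMod p) ∣ k := by
  rw [orderOf_dvd_iff_pow_eq_one, ← ZMod.natCast_eq_zero_iff, Nat.cast_sub (Nat.one_le_pow _ _ hn)]
  push_cast
  exact sub_eq_zero

theorem padicValNat_pow_orderOf_mul_sub_one {p n : ℕ} [Fact p.Prime] (hodd : Odd p) (hn : 1 < n)
    (hco : n.Coprime p) {m : ℕ} (hm : m ≠ 0) :
    padicValNat p (n ^ (orderOf (n : ZMod p) * m) - 1)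
      = padicValNat p (n ^ orderOf (n : ZMod p) - 1) + padicValNat p m := by
  have hd := orderOf_natCast_pos hco
  have hpn : ¬ p ∣ n ^ orderOf (n : ZMod p) := fun h =>
    (Nat.Prime.coprime_iff_not_dvd Fact.out).mp hco.symm ((Fact.out : p.Prime).dvd_of_dvd_pow h)
  have hlte := padicValNat.pow_sub_pow hodd (Nat.one_lt_pow hd.ne' hn)
    (by simpa using (dvd_pow_sub_one_iff_orderOf_dvd (p := p) (by omega) _).mpr dvd_rfl) hpn hm
  simpa [← pow_mul] using hlte

theorem padicValNat_pow_sub_one_of_dvd {p n k : ℕ} (hp : p ≠ 1) (hpn : p ∣ n) (hk : k ≠ 0) :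
    padicValNat p (n ^ k - 1) = 0 := by
  rcases Nat.eq_zero_or_pos n with rfl | hn
  · simp [zero_pow hk]
  refine padicValNat.eq_zero_of_not_dvd fun h => hp ?_
  have hpow : p ∣ n ^ k := dvd_pow hpn hk
  have hpos : 1 ≤ n ^ k := Nat.one_le_pow _ _ hn
  simpa [Nat.sub_sub_self hpos] using Nat.dvd_sub hpow h

theorem sum_Icc_inv_pow_padicValNat_pow_sub_one {p n : ℕ} [Fact p.Prime] (hodd : Odd p)
    (hn : 1 < n) (hco : n.Coprime p) (X : ℕ) :
    ∑ k ∈ Finset.Icc 1 X, ((p : ℝ) ^ padicValNat p (n ^ k - 1))⁻¹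
      = X - (X / orderOf (n : ZMod p) : ℕ)
        + ((p : ℝ) ^ padicValNat p (n ^ orderOf (n : ZMod p) - 1))⁻¹
          * ∑ m ∈ Finset.Icc 1 (X / orderOf (n : ZMod p)), ((p : ℝ) ^ padicValNat p m)⁻¹ :=
  sum_Icc_split_multiples
    (fun k _ hk => by
      rw [padicValNat.eq_zero_of_not_dvd
        (mt (dvd_pow_sub_one_iff_orderOf_dvd (by omega) k).mp hk), pow_zero, inv_one])
    (fun m hm => by
      rw [padicValNat_pow_orderOf_mul_sub_one hodd hn hco (by omega), pow_add, mul_inv]) X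

def padicCesaroMean (p d e : ℕ) : ℝ := 1 - 1 / (d : ℝ) * (1 - p / ((p : ℝ) ^ e * (p + 1)))

theorem exists_ratCast_eq_padicCesaroMean (p d e : ℕ) :
    ∃ q : ℚ, (q : ℝ) = padicCesaroMean p d e :=
  ⟨1 - 1 / (d : ℚ) * (1 - p / (p ^ e * (p + 1))), by simp [padicCesaroMean]⟩

theorem padicCesaroMean_lt_one {p d : ℕ} (hp : 0 < p) (hd : 0 < d) (e : ℕ) :
    padicCesaroMean p d e < 1 := by
  have hratio : (p : ℝ) / (p ^ e * (p + 1)) < 1 := by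
    have : (1 : ℝ) ≤ p ^ e := one_le_pow₀ (by exact_mod_cast hp)
    rw [div_lt_one (by positivity)]
    nlinarith
  have hgap : 0 < 1 / (d : ℝ) * (1 - p / (p ^ e * (p + 1))) := by
    have := sub_pos.mpr hratio
    positivity
  rw [padicCesaroMean]
  linarith

theorem cesaroLim_inv_pow_padicValNat_pow_sub_one_of_coprime {p n : ℕ} (hp : p.Prime)
    (hodd : Odd p) (hn : 1 < n) (hco : n.Coprime p) :
    CesaroLim (fun k => ((p : ℝ) ^ padicValNat p (n ^ k - 1))⁻¹)
      (padicCesaroMean p (orderOf (n : ZMod p))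
        (padicValNat p (n ^ orderOf (n : ZMod p) - 1))) := by
  have : Fact p.Prime := ⟨hp⟩
  set d := orderOf (n : ZMod p)
  set c := ((p : ℝ) ^ padicValNat p (n ^ d - 1))⁻¹
  have hB : padicCesaroMean p d (padicValNat p (n ^ d - 1)) = 1 - (1 - c * (p / (p + 1))) / d := by
    have : (p : ℝ) ≠ 0 := by exact_mod_cast hp.ne_zero
    simp only [padicCesaroMean, c]
    field_simp
  rw [hB]
  refine CesaroLim.of_abs_sum_sub_le (C := |1 - c * (p / (p + 1))| + |c| * 2) fun X => ?_
  refine (abs_sub_le_of_eq_sub_div_add (orderOf_natCast_pos hco)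
    (sum_Icc_inv_pow_padicValNat_pow_sub_one hodd hn hco X)).trans ?_
  gcongr
  exact abs_sum_Icc_inv_pow_padicValNat_sub_le hp _

theorem cesaroLim_inv_pow_padicValNat_pow_sub_one_of_dvd {p n : ℕ} (hp : p ≠ 1) (hpn : p ∣ n) :
    CesaroLim (fun k => ((p : ℝ) ^ padicValNat p (n ^ k - 1))⁻¹) 1 := by
  refine CesaroLim.of_tendsto (tendsto_const_nhds.congr' ?_)
  filter_upwards [eventually_ne_atTop 0] with k hk
  rw [padicValNat_pow_sub_one_of_dvd hp hpn hk, pow_zero, inv_one]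

/-- For multiplication by `n` on an ordinary elliptic curve over the algebraic closure
of `𝔽_p` (`p` an odd prime), with fixed-point counts `σ_k = (n^k - 1)² |n^k - 1|_p` and
growth rate `Λ = n²`: if `n` is coprime to `p`, the Cesàro mean
`B = 𝒞(σ_k/n^{2k}) = 𝒞(|n^k - 1|_p)` exists and equals
`1 - (1/d)(1 - p/(p^e (p+1)))` — a rational number different from `1` — where `d` is the
multiplicative order of `n` mod `p` and `e = v_p(n^d - 1)`; if `p ∣ n`, then `B = 1`. -/
theorem elliptic_cesaro (p : ℕ) (hp : p.Prime) (hodd : Odd p) (n : ℕ) (hn : 2 ≤ n) :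
    (Nat.Coprime n p →
      ∃ B : ℝ,
        B = 1 - (1 / (orderOf (n : ZMod p) : ℝ)) *
            (1 - (p : ℝ) /
              ((p : ℝ) ^ padicValNat p (n ^ orderOf (n : ZMod p) - 1) * ((p : ℝ) + 1))) ∧
        CesaroLim (fun k => (((n : ℝ) ^ k - 1) ^ 2 *
            ((p : ℝ) ^ padicValNat p (n ^ k - 1))⁻¹) / (n : ℝ) ^ (2 * k)) B ∧
        CesaroLim (fun k => ((p : ℝ) ^ padicValNat p (n ^ k - 1))⁻¹) B ∧
        (∃ q : ℚ, (q : ℝ) = B) ∧ B ≠ 1) ∧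
    (p ∣ n →
      CesaroLim (fun k => (((n : ℝ) ^ k - 1) ^ 2 *
          ((p : ℝ) ^ padicValNat p (n ^ k - 1))⁻¹) / (n : ℝ) ^ (2 * k)) 1 ∧
      CesaroLim (fun k => ((p : ℝ) ^ padicValNat p (n ^ k - 1))⁻¹) 1) := by
  have hx : (1 : ℝ) < n := by exact_mod_cast hn
  have hbdd : ∀ k, |((p : ℝ) ^ padicValNat p (n ^ k - 1))⁻¹| ≤ 1 := fun k =>
    abs_inv_pow_le_one hp.ne_zero _
  refine ⟨fun hco => ?_, fun hpn => ?_⟩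
  · have : Fact p.Prime := ⟨hp⟩
    have h := cesaroLim_inv_pow_padicValNat_pow_sub_one_of_coprime hp hodd (by omega) hco
    exact ⟨_, rfl, cesaroLim_sq_pow_sub_one_mul_div_pow hx h hbdd, h,
      exists_ratCast_eq_padicCesaroMean _ _ _,
      (padicCesaroMean_lt_one hp.pos (orderOf_natCast_pos hco) _).ne⟩
  · have h := cesaroLim_inv_pow_padicValNat_pow_sub_one_of_dvd hp.ne_one hpn
    exact ⟨cesaroLim_sq_pow_sub_one_mul_div_pow hx h hbdd, h⟩
end
end
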